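/- arXiv:2405.14302 — 8 statements merged into one kernel-verified Lean document; each statement's English description precedes it below -/
import Mathlib

section
/- Let V_1 ⊆ V_2 ⊆ ⋯ ⊆ V_n be a chain of subspaces of a finite-dimensional vector space V, and let W_1 ⊆ W_2 ⊆ ⋯ ⊆ W_n be another chain with W_i ⊆ V_i for all i and W_n = V_n. Then there exists a basis A of V_n together with, for each basis element a, a 'birth index' b(a) = min{i : a ∈ V_i} and a 'death index' d(a), such that for every i the elements of A with b(a) ≤ i form a basis of V_i and the elements of A with d(a) ≤ i form a basis of W_i. -/
open Submodule Module

section aux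

variable {𝕜 X : Type} [Field 𝕜] [AddCommGroup X] [Module 𝕜 X] [FiniteDimensional 𝕜 X]

lemma bc_exists_compl (D E : Submodule 𝕜 X) (h : D ≤ E) :
    ∃ C, C ≤ E ∧ C ⊓ D = ⊥ ∧ C ⊔ D = E := by
  obtain ⟨C', hC'⟩ := Submodule.exists_isCompl (D.comap E.subtype)
  have hinj := Submodule.injective_subtype E
  have hD : D = (D.comap E.subtype).map E.subtype := by
    rw [Submodule.map_comap_subtype, inf_eq_right.mpr h]
  refine ⟨C'.map E.subtype, Submodule.map_subtype_le E C', ?_, ?_⟩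
  · rw [hD, ← Submodule.map_inf _ hinj, hC'.symm.inf_eq_bot, Submodule.map_bot]
  · rw [hD, ← Submodule.map_sup, hC'.symm.sup_eq_top, Submodule.map_subtype_top]

lemma bc_sup (V W : ℕ → Submodule 𝕜 X) (hV : Monotone V) (hW : Monotone W)
    (hV0 : V 0 = ⊥) (hW0 : W 0 = ⊥) (C : ℕ → ℕ → Submodule 𝕜 X)
    (hCle : ∀ i j, C i j ≤ V i ⊓ W j)
    (hCsup : ∀ i j, C i j ⊔ ((V (i-1) ⊓ W j) ⊔ (V i ⊓ W (j-1))) = V i ⊓ W j) :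
    ∀ i j, (Finset.range (i+1) ×ˢ Finset.range (j+1)).sup (fun p => C p.1 p.2)
      = V i ⊓ W j := by
  have hle : ∀ i j, (Finset.range (i+1) ×ˢ Finset.range (j+1)).sup (fun p => C p.1 p.2)
      ≤ V i ⊓ W j := by
    intro i j
    apply Finset.sup_le
    intro p hp
    simp only [Finset.mem_product, Finset.mem_range] at hp
    exact le_trans (hCle p.1 p.2) (inf_le_inf (hV (by omega)) (hW (by omega)))
  have hge : ∀ s i j, i + j ≤ s →
      V i ⊓ W j ≤ (Finset.range (i+1) ×ˢ Finset.range (j+1)).sup (fun p => C p.1 p.2) := by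
    intro s
    induction s with
    | zero =>
      intro i j hij
      obtain ⟨rfl, rfl⟩ : i = 0 ∧ j = 0 := by omega
      rw [hV0, bot_inf_eq]
      exact bot_le
    | succ s ih =>
      intro i j hij
      match i, j with
      | 0, j => rw [hV0, bot_inf_eq]; exact bot_le
      | i+1, 0 => rw [hW0, inf_bot_eq]; exact bot_le
      | i+1, j+1 =>
        rw [← hCsup (i+1) (j+1)]
        simp only [Nat.add_sub_cancel]
        refine sup_le ?_ (sup_le ?_ ?_)
        · have hmem : ((i+1, j+1) : ℕ × ℕ) ∈ Finset.range (i+1+1) ×ˢ Finset.range (j+1+1) :=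
            Finset.mem_product.mpr ⟨Finset.mem_range.mpr (by omega), Finset.mem_range.mpr (by omega)⟩
          exact Finset.le_sup (f := fun p : ℕ × ℕ => C p.1 p.2) hmem
        · refine le_trans (ih i (j+1) (by omega)) (Finset.sup_mono ?_)
          exact Finset.product_subset_product
            (Finset.range_subset_range.mpr (by omega)) le_rfl
        · refine le_trans (ih (i+1) j (by omega)) (Finset.sup_mono ?_)
          exact Finset.product_subset_product le_rfl
            (Finset.range_subset_range.mpr (by omega))
  exact fun i j => le_antisymm (hle i j) (hge (i+j) i j le_rfl)

lemma bc_rank (V W : ℕ → Submodule 𝕜 X) (hV : Monotone V) (hW : Monotone W)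
    (hV0 : V 0 = ⊥) (hW0 : W 0 = ⊥) (C : ℕ → ℕ → Submodule 𝕜 X)
    (hCle : ∀ i j, C i j ≤ V i ⊓ W j)
    (hCdisj : ∀ i j, C i j ⊓ ((V (i-1) ⊓ W j) ⊔ (V i ⊓ W (j-1))) = ⊥)
    (hCsup : ∀ i j, C i j ⊔ ((V (i-1) ⊓ W j) ⊔ (V i ⊓ W (j-1))) = V i ⊓ W j) :
    ∀ i j, ∑ p ∈ Finset.range (i+1) ×ˢ Finset.range (j+1), finrank 𝕜 (C p.1 p.2)
      = finrank 𝕜 ↥(V i ⊓ W j) := by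
  have key : ∀ i j, finrank 𝕜 (C i j) + finrank 𝕜 ↥(V (i-1) ⊓ W j)
      + finrank 𝕜 ↥(V i ⊓ W (j-1))
      = finrank 𝕜 ↥(V i ⊓ W j) + finrank 𝕜 ↥(V (i-1) ⊓ W (j-1)) := by
    intro i j
    have h1 := Submodule.finrank_sup_add_finrank_inf_eq (C i j)
      ((V (i-1) ⊓ W j) ⊔ (V i ⊓ W (j-1)))
    rw [hCsup, hCdisj, finrank_bot] at h1
    have h2 := Submodule.finrank_sup_add_finrank_inf_eq (V (i-1) ⊓ W j) (V i ⊓ W (j-1))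
    have h3 : (V (i-1) ⊓ W j) ⊓ (V i ⊓ W (j-1)) = V (i-1) ⊓ W (j-1) := by
      apply le_antisymm
      · exact le_inf (le_trans inf_le_left inf_le_left)
          (le_trans inf_le_right inf_le_right)
      · exact le_inf (le_inf inf_le_left (le_trans inf_le_right (hW (Nat.sub_le j 1))))
          (le_inf (le_trans inf_le_left (hV (Nat.sub_le i 1))) inf_le_right)
    rw [h3] at h2
    omega
  have hzV : ∀ j, finrank 𝕜 ↥(V 0 ⊓ W j) = 0 := by
    intro j; rw [hV0, bot_inf_eq, finrank_bot]
  have hzW : ∀ i, finrank 𝕜 ↥(V i ⊓ W 0) = 0 := by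
    intro i; rw [hW0, inf_bot_eq, finrank_bot]
  have hC0 : ∀ i, finrank 𝕜 (C i 0) = 0 := by
    intro i
    have : C i 0 = ⊥ := le_bot_iff.mp (le_trans (hCle i 0) (by rw [hW0, inf_bot_eq]))
    rw [this, finrank_bot]
  have inner : ∀ i j, (∑ j' ∈ Finset.range (j+1), finrank 𝕜 (C i j'))
      + finrank 𝕜 ↥(V (i-1) ⊓ W j) = finrank 𝕜 ↥(V i ⊓ W j) := by
    intro i j
    induction j with
    | zero =>
      rw [Finset.sum_range_one, hC0, hzW, hzW]
    | succ j ih =>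
      rw [Finset.sum_range_succ]
      have k : finrank 𝕜 (C i (j+1)) + finrank 𝕜 ↥(V (i-1) ⊓ W (j+1))
          + finrank 𝕜 ↥(V i ⊓ W j)
          = finrank 𝕜 ↥(V i ⊓ W (j+1)) + finrank 𝕜 ↥(V (i-1) ⊓ W j) := key i (j+1)
      omega
  have outer : ∀ i j, (∑ i' ∈ Finset.range (i+1), ∑ j' ∈ Finset.range (j+1),
      finrank 𝕜 (C i' j')) = finrank 𝕜 ↥(V i ⊓ W j) := by
    intro i j
    induction i with
    | zero =>
      rw [Finset.sum_range_one]
      have h : (∑ j' ∈ Finset.range (j+1), finrank 𝕜 (C 0 j'))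
          + finrank 𝕜 ↥(V 0 ⊓ W j) = finrank 𝕜 ↥(V 0 ⊓ W j) := inner 0 j
      have hz := hzV j
      omega
    | succ i ih =>
      rw [Finset.sum_range_succ]
      have h : (∑ j' ∈ Finset.range (j+1), finrank 𝕜 (C (i+1) j'))
          + finrank 𝕜 ↥(V i ⊓ W j) = finrank 𝕜 ↥(V (i+1) ⊓ W j) := inner (i+1) j
      omega
  intro i j
  rw [Finset.sum_product]
  exact outer i j

/-- Extended filtration on ℕ indices: 0 ↦ ⊥, k+1 ↦ Vc (min k n). -/
def bcV {n : ℕ} (Vc : Fin (n+1) → Submodule 𝕜 X) : ℕ → Submodule 𝕜 X :=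
  fun k => if h : k = 0 then ⊥ else Vc ⟨min (k-1) n, by omega⟩

lemma bcV_zero {n : ℕ} (Vc : Fin (n+1) → Submodule 𝕜 X) : bcV Vc 0 = ⊥ := rfl

lemma bcV_succ {n : ℕ} (Vc : Fin (n+1) → Submodule 𝕜 X) (i : Fin (n+1)) :
    bcV Vc (i.val + 1) = Vc i := by
  have hi := i.isLt
  simp only [bcV]
  rw [dif_neg (by omega : ¬ i.val + 1 = 0)]
  congr 1
  apply Fin.ext
  simp only []
  omega

lemma bcV_mono {n : ℕ} (Vc : Fin (n+1) → Submodule 𝕜 X) (hV : Monotone Vc) :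
    Monotone (bcV Vc) := by
  intro a b hab
  match a, b with
  | 0, b => rw [bcV_zero]; exact bot_le
  | a+1, b+1 =>
    simp only [bcV]
    rw [dif_neg (by omega : ¬ a + 1 = 0), dif_neg (by omega : ¬ b + 1 = 0)]
    exact hV (by simp only [Fin.mk_le_mk]; omega)



/-- Existence of a barcode basis.  Given chains of subspaces
`V_1 ⊆ ⋯ ⊆ V_n` and `W_1 ⊆ ⋯ ⊆ W_n` with `W_i ⊆ V_i` and `W_n = V_n` inside a
finite-dimensional vector space, there is a linearly independent family `b`
together with birth indices (each being `min {i : b a ∈ V_i}`) and death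
indices such that for every `i` the members born by `i` form a basis of `V_i`
and the members dead by `i` form a basis of `W_i`. -/
theorem exists_barcode_basis (𝕜 : Type) [Field 𝕜] (X : Type) [AddCommGroup X]
    [Module 𝕜 X] [FiniteDimensional 𝕜 X] (n : ℕ)
    (Vc Wc : Fin (n + 1) → Submodule 𝕜 X)
    (hV : Monotone Vc) (hW : Monotone Wc) (hWV : ∀ i, Wc i ≤ Vc i)
    (hlast : Wc (Fin.last n) = Vc (Fin.last n)) :
    ∃ (m : ℕ) (b : Fin m → X) (birth death : Fin m → Fin (n + 1)),
      LinearIndependent 𝕜 b ∧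
      (∀ i, Submodule.span 𝕜 (b '' {a | birth a ≤ i}) = Vc i) ∧
      (∀ i, Submodule.span 𝕜 (b '' {a | death a ≤ i}) = Wc i) ∧
      (∀ a, b a ∈ Vc (birth a) ∧ ∀ i, b a ∈ Vc i → birth a ≤ i) := by
  classical
  set V' : ℕ → Submodule 𝕜 X := bcV Vc with hV'def
  set W' : ℕ → Submodule 𝕜 X := bcV Wc with hW'def
  have hV' : Monotone V' := bcV_mono Vc hV
  have hW' : Monotone W' := bcV_mono Wc hW
  have hV0 : V' 0 = ⊥ := bcV_zero Vc
  have hW0 : W' 0 = ⊥ := bcV_zero Wc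
  have hVsucc : ∀ i : Fin (n+1), V' (i.val + 1) = Vc i := bcV_succ Vc
  have hWsucc : ∀ i : Fin (n+1), W' (i.val + 1) = Wc i := bcV_succ Wc
  have hVlast : V' (n+1) = Vc (Fin.last n) := bcV_succ Vc (Fin.last n)
  have hWlast : W' (n+1) = Wc (Fin.last n) := bcV_succ Wc (Fin.last n)
  -- complements
  have hDle : ∀ i j : ℕ, ((V' (i-1) ⊓ W' j) ⊔ (V' i ⊓ W' (j-1))) ≤ V' i ⊓ W' j := by
    intro i j
    exact sup_le (inf_le_inf (hV' (Nat.sub_le i 1)) le_rfl)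
      (inf_le_inf le_rfl (hW' (Nat.sub_le j 1)))
  choose C hC1 hC2 hC3 using fun i j => bc_exists_compl _ _ (hDle i j)
  have hsup := bc_sup V' W' hV' hW' hV0 hW0 C hC1 hC3
  have hrank := bc_rank V' W' hV' hW' hV0 hW0 C hC1 hC2 hC3
  -- bases of the pieces
  let r : Fin (n+2) × Fin (n+2) → ℕ := fun p => finrank 𝕜 (C p.1.val p.2.val)
  let bC : (p : Fin (n+2) × Fin (n+2)) → Basis (Fin (r p)) 𝕜 (C p.1.val p.2.val) :=
    fun p => Module.finBasis 𝕜 (C p.1.val p.2.val)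
  let ι := (p : Fin (n+2) × Fin (n+2)) × Fin (r p)
  let b0 : ι → X := fun a => (bC a.1 a.2 : X)
  let e : Fin (Fintype.card ι) ≃ ι := (Fintype.equivFin ι).symm
  have hb0mem : ∀ a : ι, b0 a ∈ C a.1.1.val a.1.2.val := fun a => SetLike.coe_mem _
  -- span of a collection of pieces
  have hspan : ∀ s : Finset (Fin (n+2) × Fin (n+2)),
      Submodule.span 𝕜 (b0 '' {a : ι | a.1 ∈ s}) = s.sup (fun p => C p.1.val p.2.val) := by
    intro s
    apply le_antisymm
    · rw [Submodule.span_le]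
      rintro x ⟨a, ha, rfl⟩
      exact SetLike.mem_coe.mpr
        ((Finset.le_sup (f := fun p => C p.1.val p.2.val) ha) (hb0mem a))
    · apply Finset.sup_le
      intro p hp
      have hspanp : C p.1.val p.2.val
          = Submodule.span 𝕜 (Set.range (fun k : Fin (r p) => ((bC p k : X)))) := by
        conv_lhs => rw [← Submodule.map_subtype_top (C p.1.val p.2.val)]
        rw [← (bC p).span_eq, Submodule.map_span]
        congr 1
        rw [← Set.range_comp]
        rfl
      rw [hspanp]
      apply Submodule.span_mono
      rintro x ⟨k, rfl⟩
      exact ⟨⟨p, k⟩, hp, rfl⟩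
  -- converting finset sups
  have conv_sup : ∀ I J : ℕ, I ≤ n+1 → J ≤ n+1 →
      (Finset.univ.filter
        (fun p : Fin (n+2) × Fin (n+2) => p.1.val ≤ I ∧ p.2.val ≤ J)).sup
        (fun p => C p.1.val p.2.val) = V' I ⊓ W' J := by
    intro I J hI hJ
    rw [← hsup I J]
    apply le_antisymm
    · apply Finset.sup_le
      intro p hp
      rw [Finset.mem_filter] at hp
      have hmem : (p.1.val, p.2.val) ∈ Finset.range (I+1) ×ˢ Finset.range (J+1) :=
        Finset.mem_product.mpr
          ⟨Finset.mem_range.mpr (by omega), Finset.mem_range.mpr (by omega)⟩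
      exact Finset.le_sup (f := fun q : ℕ × ℕ => C q.1 q.2) hmem
    · apply Finset.sup_le
      intro q hq
      rw [Finset.mem_product, Finset.mem_range, Finset.mem_range] at hq
      have hmem : (⟨⟨q.1, by omega⟩, ⟨q.2, by omega⟩⟩ : Fin (n+2) × Fin (n+2)) ∈
          Finset.univ.filter
            (fun p : Fin (n+2) × Fin (n+2) => p.1.val ≤ I ∧ p.2.val ≤ J) := by
        rw [Finset.mem_filter]
        exact ⟨Finset.mem_univ _, (by omega : q.1 ≤ I), (by omega : q.2 ≤ J)⟩
      exact Finset.le_sup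
        (f := fun p : Fin (n+2) × Fin (n+2) => C p.1.val p.2.val) hmem
  have htop : V' (n+1) ⊓ W' (n+1) = Vc (Fin.last n) := by
    rw [hVlast, hWlast, hlast, inf_idem]
  refine ⟨Fintype.card ι, fun a => b0 (e a),
    fun a => ⟨(e a).1.1.val - 1, by have := (e a).1.1.isLt; omega⟩,
    fun a => ⟨(e a).1.2.val - 1, by have := (e a).1.2.isLt; omega⟩, ?_, ?_, ?_, ?_⟩
  · -- linear independence
    rw [linearIndependent_iff_card_eq_finrank_span]
    have h1 : Set.range (fun a => b0 (e a)) = b0 '' {a : ι | a.1 ∈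
        Finset.univ.filter
          (fun p : Fin (n+2) × Fin (n+2) => p.1.val ≤ n+1 ∧ p.2.val ≤ n+1)} := by
      ext y
      constructor
      · rintro ⟨x, rfl⟩
        refine ⟨e x, ?_, rfl⟩
        simp only [Set.mem_setOf_eq, Finset.mem_filter]
        refine ⟨Finset.mem_univ _, ?_, ?_⟩
        · have := (e x).1.1.isLt; omega
        · have := (e x).1.2.isLt; omega
      · rintro ⟨a, _, rfl⟩
        exact ⟨e.symm a, by simp⟩
    rw [Set.finrank, h1, hspan, conv_sup (n+1) (n+1) le_rfl le_rfl, htop]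
    rw [Fintype.card_fin]
    have hcard : Fintype.card ι = ∑ p : Fin (n+2) × Fin (n+2), r p := by
      rw [Fintype.card_sigma]
      simp only [Fintype.card_fin]
    rw [hcard]
    have hsum : ∑ p : Fin (n+2) × Fin (n+2), r p
        = ∑ p ∈ Finset.range (n+2) ×ˢ Finset.range (n+2), finrank 𝕜 (C p.1 p.2) := by
      rw [Finset.sum_product, Fintype.sum_prod_type]
      calc ∑ a : Fin (n+2), ∑ b : Fin (n+2), finrank 𝕜 (C a.val b.val)
          = ∑ a : Fin (n+2), ∑ b ∈ Finset.range (n+2), finrank 𝕜 (C a.val b) := by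
            exact Finset.sum_congr rfl fun a _ =>
              Fin.sum_univ_eq_sum_range (fun b => finrank 𝕜 (C a.val b)) (n+2)
        _ = ∑ a ∈ Finset.range (n+2), ∑ b ∈ Finset.range (n+2), finrank 𝕜 (C a b) :=
            Fin.sum_univ_eq_sum_range
              (fun a => ∑ b ∈ Finset.range (n+2), finrank 𝕜 (C a b)) (n+2)
    rw [hsum, hrank (n+1) (n+1), htop]
  · -- birth spans
    intro i
    have hset : (fun a => b0 (e a)) ''
        {x | (⟨(e x).1.1.val - 1, by have := (e x).1.1.isLt; omega⟩ : Fin (n+1)) ≤ i}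
        = b0 '' {a : ι | a.1 ∈ Finset.univ.filter
          (fun p : Fin (n+2) × Fin (n+2) => p.1.val ≤ i.val + 1 ∧ p.2.val ≤ n+1)} := by
      ext y
      constructor
      · rintro ⟨x, hx, rfl⟩
        refine ⟨e x, ?_, rfl⟩
        have hx' : (e x).1.1.val - 1 ≤ i.val := hx
        simp only [Set.mem_setOf_eq, Finset.mem_filter]
        refine ⟨Finset.mem_univ _, by omega, by have := (e x).1.2.isLt; omega⟩
      · rintro ⟨a, ha, rfl⟩
        refine ⟨e.symm a, ?_, by show b0 (e (e.symm a)) = b0 a; rw [e.apply_symm_apply a]⟩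
        simp only [Set.mem_setOf_eq, Finset.mem_filter] at ha
        show ((⟨(e (e.symm a)).1.1.val - 1, by have := (e (e.symm a)).1.1.isLt; omega⟩ :
          Fin (n+1)) : Fin (n+1)) ≤ i
        have : (e (e.symm a)).1.1.val - 1 ≤ i.val := by
          rw [e.apply_symm_apply a]; omega
        exact this
    rw [hset, hspan, conv_sup (i.val+1) (n+1) (by have := i.isLt; omega) le_rfl,
      hVsucc i, hWlast, hlast]
    exact inf_eq_left.mpr (hV (Fin.le_last i))
  · -- death spans
    intro i
    have hset : (fun a => b0 (e a)) ''
        {x | (⟨(e x).1.2.val - 1, by have := (e x).1.2.isLt; omega⟩ : Fin (n+1)) ≤ i}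
        = b0 '' {a : ι | a.1 ∈ Finset.univ.filter
          (fun p : Fin (n+2) × Fin (n+2) => p.1.val ≤ n+1 ∧ p.2.val ≤ i.val + 1)} := by
      ext y
      constructor
      · rintro ⟨x, hx, rfl⟩
        refine ⟨e x, ?_, rfl⟩
        have hx' : (e x).1.2.val - 1 ≤ i.val := hx
        simp only [Set.mem_setOf_eq, Finset.mem_filter]
        refine ⟨Finset.mem_univ _, by have := (e x).1.1.isLt; omega, by omega⟩
      · rintro ⟨a, ha, rfl⟩
        refine ⟨e.symm a, ?_, by show b0 (e (e.symm a)) = b0 a; rw [e.apply_symm_apply a]⟩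
        simp only [Set.mem_setOf_eq, Finset.mem_filter] at ha
        show ((⟨(e (e.symm a)).1.2.val - 1, by have := (e (e.symm a)).1.2.isLt; omega⟩ :
          Fin (n+1)) : Fin (n+1)) ≤ i
        have : (e (e.symm a)).1.2.val - 1 ≤ i.val := by
          rw [e.apply_symm_apply a]; omega
        exact this
    rw [hset, hspan, conv_sup (n+1) (i.val+1) le_rfl (by have := i.isLt; omega),
      hVlast, hWsucc i]
    exact inf_eq_right.mpr ((hW (Fin.le_last i)).trans hlast.le)
  · -- birth is minimal
    intro a
    have hv1 : 1 ≤ (e a).1.1.val := by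
      by_contra h
      have hv0 : (e a).1.1.val = 0 := by omega
      have hbot : C (e a).1.1.val (e a).1.2.val = ⊥ := by
        apply le_bot_iff.mp
        refine le_trans (hC1 _ _) (le_trans inf_le_left (le_of_eq ?_))
        rw [hv0]; exact hV0
      have hk' : (e a).2.val < finrank 𝕜 (C (e a).1.1.val (e a).1.2.val) := (e a).2.isLt
      rw [hbot, finrank_bot] at hk'
      omega
    have hVeq : V' (e a).1.1.val
        = Vc ⟨(e a).1.1.val - 1, by have := (e a).1.1.isLt; omega⟩ := by
      have h := bcV_succ Vc ⟨(e a).1.1.val - 1, by have := (e a).1.1.isLt; omega⟩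
      rw [show ((e a).1.1.val - 1) + 1 = (e a).1.1.val from by omega] at h
      exact h
    constructor
    · rw [← hVeq]
      exact (le_trans (hC1 _ _) inf_le_left) (hb0mem (e a))
    · intro t ht
      by_contra hcon
      rw [Fin.not_le] at hcon
      have hcon' : t.val < (e a).1.1.val - 1 := hcon
      rw [← bcV_succ Vc t] at ht
      have h1 : b0 (e a) ∈ V' ((e a).1.1.val - 1) := hV' (by omega : t.val + 1 ≤ (e a).1.1.val - 1) ht
      have h2 : b0 (e a) ∈ W' (e a).1.2.val := (le_trans (hC1 _ _) inf_le_right) (hb0mem (e a))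
      have h3 : b0 (e a) ∈ C (e a).1.1.val (e a).1.2.val ⊓
          ((V' ((e a).1.1.val - 1) ⊓ W' (e a).1.2.val)
            ⊔ (V' (e a).1.1.val ⊓ W' ((e a).1.2.val - 1))) :=
        Submodule.mem_inf.mpr ⟨hb0mem (e a),
          Submodule.mem_sup_left (Submodule.mem_inf.mpr ⟨h1, h2⟩)⟩
      rw [hC2] at h3
      have hne : b0 (e a) ≠ 0 := by
        have hz := (bC (e a).1).ne_zero (e a).2
        intro h
        have h' : ((bC (e a).1 (e a).2 :
            C (e a).1.1.val (e a).1.2.val) : X) = 0 := h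
        exact hz (by exact_mod_cast h')
      exact hne ((Submodule.mem_bot 𝕜).mp h3)

end aux
end

section
/- Any two barcode bases of a filtered complex give rise to the same multiset of bars [b, d). Equivalently, in the abstract setting of chains of subspaces W_i ⊆ V_i as above, the multiset of pairs (birth, death) of any barcode basis is determined by the dimensions dim(V_i ∩ W_j) for all i, j, hence is independent of the choice of barcode basis. -/
/-- `b`, with attached intervals `[birth a, death a)`, is a barcode basis for
the nested chains `Wc i ⊆ Vc i`: it is linearly independent, the members born
by `i` form a basis of `V_i`, and the members dead by `i` form a basis of
`W_i`, for every `i`. -/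
def IsBarcodeBasis (𝕜 : Type) [Field 𝕜] (X : Type) [AddCommGroup X] [Module 𝕜 X]
    {n : ℕ} (Vc Wc : Fin (n + 1) → Submodule 𝕜 X) {m : ℕ} (b : Fin m → X)
    (birth death : Fin m → Fin (n + 1)) : Prop :=
  LinearIndependent 𝕜 b ∧
  (∀ i, Submodule.span 𝕜 (b '' {a | birth a ≤ i}) = Vc i) ∧
  (∀ i, Submodule.span 𝕜 (b '' {a | death a ≤ i}) = Wc i)

open Finset in
lemma my_card_eq_sum_count {α : Type*} [Fintype α] [DecidableEq α] (s : Multiset α) :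
    Multiset.card s = ∑ x ∈ Finset.univ, s.count x := by
  rw [← Multiset.toFinset_sum_count_eq]
  exact Finset.sum_subset (Finset.subset_univ _)
    (by intro x _ hx; rw [Multiset.count_eq_zero]; simpa using hx)

lemma my_comb {N : ℕ} (s t : Multiset (Fin N × Fin N))
    (h : ∀ i j, (s.filter fun p => p.1 ≤ i ∧ p.2 ≤ j).card
      = (t.filter fun p => p.1 ≤ i ∧ p.2 ≤ j).card) : s = t := by
  have key : ∀ k (p : Fin N × Fin N), p.1.val + p.2.val = k → s.count p = t.count p := by
    intro k
    induction k using Nat.strong_induction_on with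
    | _ k ih =>
      intro p hk
      have hs := h p.1 p.2
      rw [my_card_eq_sum_count, my_card_eq_sum_count] at hs
      simp only [Multiset.count_filter] at hs
      rw [← Finset.sum_filter, ← Finset.sum_filter] at hs
      set B := Finset.univ.filter (fun q : Fin N × Fin N => q.1 ≤ p.1 ∧ q.2 ≤ p.2) with hB
      have hpB : p ∈ B := by simp [hB]
      rw [← Finset.sum_erase_add B _ hpB, ← Finset.sum_erase_add B _ hpB] at hs
      have herase : ∑ q ∈ B.erase p, s.count q = ∑ q ∈ B.erase p, t.count q := by
        refine Finset.sum_congr rfl fun q hq => ?_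
        obtain ⟨hne, hqB⟩ := Finset.mem_erase.mp hq
        simp only [hB, Finset.mem_filter] at hqB
        refine ih (q.1.val + q.2.val) ?_ q rfl
        have h1 : q.1.val ≤ p.1.val := hqB.2.1
        have h2 : q.2.val ≤ p.2.val := hqB.2.2
        have h3 : ¬(q.1.val = p.1.val ∧ q.2.val = p.2.val) := by
          rintro ⟨e1, e2⟩
          exact hne (Prod.ext (Fin.ext e1) (Fin.ext e2))
        omega
      omega
  exact Multiset.ext.mpr fun p => key _ p rfl

lemma my_finrank_span_image_filter {𝕜 X : Type} [Field 𝕜] [AddCommGroup X] [Module 𝕜 X]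
    {m : ℕ} {b : Fin m → X} (hb : LinearIndependent 𝕜 b) (P : Fin m → Prop) [DecidablePred P] :
    Module.finrank 𝕜 (Submodule.span 𝕜 (b '' {a | P a})) = (Finset.univ.filter P).card := by
  rw [Set.image_eq_range b {a | P a}]
  exact (finrank_span_eq_card (hb.comp _ Subtype.val_injective)).trans
    (by simp [Fintype.card_subtype])

lemma my_count (𝕜 : Type) [Field 𝕜] (X : Type) [AddCommGroup X] [Module 𝕜 X]
    {n : ℕ} (Vc Wc : Fin (n + 1) → Submodule 𝕜 X) {m : ℕ} (b : Fin m → X)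
    (birth death : Fin m → Fin (n + 1))
    (h : IsBarcodeBasis 𝕜 X Vc Wc b birth death) (i j : Fin (n + 1)) :
    (Finset.univ.filter fun a => birth a ≤ i ∧ death a ≤ j).card
      + Module.finrank 𝕜 ↥(Vc i ⊔ Wc j)
      = Module.finrank 𝕜 (Vc i) + Module.finrank 𝕜 (Wc j) := by
  obtain ⟨hind, hVb, hWb⟩ := h
  have e1 : Module.finrank 𝕜 (Vc i) = (Finset.univ.filter fun a => birth a ≤ i).card := by
    rw [← hVb i]; exact my_finrank_span_image_filter hind _
  have e2 : Module.finrank 𝕜 (Wc j) = (Finset.univ.filter fun a => death a ≤ j).card := by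
    rw [← hWb j]; exact my_finrank_span_image_filter hind _
  have e3 : Module.finrank 𝕜 ↥(Vc i ⊔ Wc j)
      = (Finset.univ.filter fun a => birth a ≤ i ∨ death a ≤ j).card := by
    rw [← hVb i, ← hWb j, ← Submodule.span_union, ← Set.image_union, ← Set.setOf_or]
    exact my_finrank_span_image_filter hind _
  rw [e1, e2, e3]
  have := Finset.card_union_add_card_inter
    (Finset.univ.filter fun a => birth a ≤ i) (Finset.univ.filter fun a => death a ≤ j)
  rw [← Finset.filter_or, ← Finset.filter_and] at this
  omega

/-- Any two barcode bases of the same pair of chains `W_i ⊆ V_i` (with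
`W_n = V_n`) give rise to the same multiset of bars `[b, d)`. -/
theorem barcode_multiset_unique (𝕜 : Type) [Field 𝕜] (X : Type) [AddCommGroup X]
    [Module 𝕜 X] [FiniteDimensional 𝕜 X] (n : ℕ)
    (Vc Wc : Fin (n + 1) → Submodule 𝕜 X)
    (hV : Monotone Vc) (hW : Monotone Wc) (hWV : ∀ i, Wc i ≤ Vc i)
    (hlast : Wc (Fin.last n) = Vc (Fin.last n))
    (m m' : ℕ) (b : Fin m → X) (b' : Fin m' → X)
    (birth death : Fin m → Fin (n + 1)) (birth' death' : Fin m' → Fin (n + 1))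
    (h1 : IsBarcodeBasis 𝕜 X Vc Wc b birth death)
    (h2 : IsBarcodeBasis 𝕜 X Vc Wc b' birth' death') :
    (Finset.univ.val.map fun a => (birth a, death a)) =
      (Finset.univ.val.map fun a => (birth' a, death' a)) := by
  apply my_comb
  intro i j
  have k1 := my_count 𝕜 X Vc Wc b birth death h1 i j
  have k2 := my_count 𝕜 X Vc Wc b' birth' death' h2 i j
  rw [Multiset.filter_map, Multiset.card_map, Multiset.filter_map, Multiset.card_map]
  have l1 : (Multiset.filter
      ((fun p : Fin (n+1) × Fin (n+1) => p.1 ≤ i ∧ p.2 ≤ j) ∘ fun a => (birth a, death a))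
      Finset.univ.val).card
      = (Finset.univ.filter fun a => birth a ≤ i ∧ death a ≤ j).card := rfl
  have l2 : (Multiset.filter
      ((fun p : Fin (n+1) × Fin (n+1) => p.1 ≤ i ∧ p.2 ≤ j) ∘ fun a => (birth' a, death' a))
      Finset.univ.val).card
      = (Finset.univ.filter fun a => birth' a ≤ i ∧ death' a ≤ j).card := rfl
  rw [l1, l2]
  omega
end

section
/- If M is a persistence module over {1,…,n} with all M_i finite-dimensional, then M is isomorphic to a finite direct sum of interval modules ⨁_{j=1}^g I_{[a_j, b_j)}, and the multiset of intervals {[a_j, b_j)} is uniquely determined by M up to isomorphism. -/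
/-- A one-parameter persistence module over the linear order `{1, …, n}`
(encoded by `Fin n`): vector spaces `V i` with structure maps `V i → V j` for
`i ≤ j`, functorially. -/
structure PersMod (k : Type) [Field k] (n : ℕ) where
  V : Fin n → Type
  [acg : ∀ i, AddCommGroup (V i)]
  [mod : ∀ i, Module k (V i)]
  map : ∀ {i j : Fin n}, i ≤ j → (V i →ₗ[k] V j)
  map_id : ∀ i : Fin n, map (le_refl i) = LinearMap.id
  map_comp : ∀ {i j l : Fin n} (hij : i ≤ j) (hjl : j ≤ l),
    (map hjl).comp (map hij) = map (hij.trans hjl)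

attribute [instance] PersMod.acg PersMod.mod

variable {k : Type} [Field k] {n : ℕ}

/-- A morphism of persistence modules: a natural transformation. -/
@[ext]
structure PersHom (M N : PersMod k n) where
  app : ∀ i, M.V i →ₗ[k] N.V i
  natural : ∀ {i j : Fin n} (h : i ≤ j),
    (N.map h).comp (app i) = (app j).comp (M.map h)

/-- The sum of two morphisms of persistence modules. -/
def PersHom.addH {M N : PersMod k n} (φ ψ : PersHom M N) : PersHom M N where
  app i := φ.app i + ψ.app i
  natural := by
    intro i j h
    ext x
    have h1 := LinearMap.congr_fun (φ.natural h) x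
    have h2 := LinearMap.congr_fun (ψ.natural h) x
    simp only [LinearMap.comp_apply, LinearMap.add_apply] at *
    rw [map_add, h1, h2]

/-- The scalar multiple of a morphism of persistence modules. -/
def PersHom.smulH {M N : PersMod k n} (c : k) (φ : PersHom M N) : PersHom M N where
  app i := c • φ.app i
  natural := by
    intro i j h
    ext x
    have h1 := LinearMap.congr_fun (φ.natural h) x
    simp only [LinearMap.comp_apply, LinearMap.smul_apply] at *
    rw [map_smul, h1]

/-- The zero morphism of persistence modules. -/
def PersHom.zeroH (M N : PersMod k n) : PersHom M N where
  app _ := 0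
  natural := by intro i j h; ext x; simp

/-- The identity morphism of a persistence module. -/
def PersHom.idH (M : PersMod k n) : PersHom M M where
  app _ := LinearMap.id
  natural := by intro i j h; ext x; simp

/-- Composition of morphisms of persistence modules. -/
def PersHom.compH {L M N : PersMod k n} (φ : PersHom M N) (ψ : PersHom L M) :
    PersHom L N where
  app i := (φ.app i).comp (ψ.app i)
  natural := by
    intro i j h
    ext x
    have h1 := LinearMap.congr_fun (φ.natural h) (ψ.app i x)
    have h2 := LinearMap.congr_fun (ψ.natural h) x
    simp only [LinearMap.comp_apply] at *
    rw [h1, h2]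

/-- The difference of two morphisms of persistence modules. -/
def PersHom.subH {M N : PersMod k n} (φ ψ : PersHom M N) : PersHom M N where
  app i := φ.app i - ψ.app i
  natural := by
    intro i j h
    ext x
    have h1 := LinearMap.congr_fun (φ.natural h) x
    have h2 := LinearMap.congr_fun (ψ.natural h) x
    simp only [LinearMap.comp_apply, LinearMap.sub_apply] at *
    rw [map_sub, h1, h2]

/-- The space at index `i` of the interval module `I_{[a,b)}` (1-based
interval endpoints): the field `k` if `a ≤ i < b`, zero otherwise. -/
def intervalSpace (k : Type) [Field k] (n : ℕ) (a b : ℕ) (i : Fin n) :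
    Submodule k k :=
  if a ≤ (i : ℕ) + 1 ∧ (i : ℕ) + 1 < b then ⊤ else ⊥

/-- The interval persistence module `I_{[a,b)}`: it is `k` on indices
`a ≤ i < b` with identity structure maps, and `0` elsewhere. -/
def intervalMod (k : Type) [Field k] (n : ℕ) (a b : ℕ) : PersMod k n where
  V i := ↥(intervalSpace k n a b i)
  map {i j} h :=
    { toFun := fun x =>
        ⟨if a ≤ (j : ℕ) + 1 ∧ (j : ℕ) + 1 < b then (x : k) else 0, by
          by_cases hc : a ≤ (j : ℕ) + 1 ∧ (j : ℕ) + 1 < b <;>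
            simp [intervalSpace, hc]⟩
      map_add' := by
        intro x y
        apply Subtype.ext
        simp only [Submodule.coe_add]
        split_ifs <;> simp
      map_smul' := by
        intro c x
        apply Subtype.ext
        simp only [Submodule.coe_smul, RingHom.id_apply]
        split_ifs <;> simp }
  map_id := by
    intro i
    ext x
    by_cases hc : a ≤ (i : ℕ) + 1 ∧ (i : ℕ) + 1 < b
    · simp [hc]
    · have : (x : k) = 0 := by
        have hx := x.2
        simp [intervalSpace, hc] at hx
        exact congrArg Subtype.val hx
      simp [hc, this]
  map_comp := by
    intro i j l hij hjl
    ext x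
    simp only [LinearMap.comp_apply, LinearMap.coe_mk, AddHom.coe_mk]
    by_cases hl : a ≤ (l : ℕ) + 1 ∧ (l : ℕ) + 1 < b
    · by_cases hj : a ≤ (j : ℕ) + 1 ∧ (j : ℕ) + 1 < b
      · simp [hl, hj]
      · have : (x : k) = 0 := by
          have hx := x.2
          have hij' : (i : ℕ) ≤ (j : ℕ) := hij
          have hjl' : (j : ℕ) ≤ (l : ℕ) := hjl
          obtain ⟨hl1, hl2⟩ := hl
          have hi : ¬(a ≤ (i : ℕ) + 1 ∧ (i : ℕ) + 1 < b) := by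
            rintro ⟨h1, h2⟩
            exact hj ⟨by omega, by omega⟩
          simp [intervalSpace, hi] at hx
          exact congrArg Subtype.val hx
        simp [hl, hj, this]
    · simp [hl]

/-- The direct sum (finite product) of a finite family of persistence
modules. -/
def dSum {g : ℕ} (F : Fin g → PersMod k n) : PersMod k n where
  V i := ∀ j, (F j).V i
  map {i j} h := LinearMap.pi fun l => ((F l).map h).comp (LinearMap.proj l)
  map_id := by
    intro i
    apply LinearMap.ext
    intro x
    funext l
    have := LinearMap.congr_fun ((F l).map_id i) (x l)
    simpa [LinearMap.pi_apply] using this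
  map_comp := by
    intro i j l hij hjl
    apply LinearMap.ext
    intro x
    funext m
    have := LinearMap.congr_fun ((F m).map_comp hij hjl) (x m)
    simpa [LinearMap.pi_apply] using this

/-- Isomorphism of persistence modules. -/
def PersMod.Iso (M N : PersMod k n) : Prop :=
  ∃ (φ : PersHom M N) (ψ : PersHom N M),
    φ.compH ψ = PersHom.idH N ∧ ψ.compH φ = PersHom.idH M


/-!
Existence is proved by induction on `n` and, for fixed `n`, on the dimension of the last space
`M_n`. If `M_n = 0`, the module is determined by its restriction to `{1, …, n-1}`. Otherwise
let `p₀` be the first index whose map to `M_n` is nonzero, pick `v ∈ M_{p₀}` with nonzero image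
`u ∈ M_n` and a complement `C` of `k u`. The vectors `M(p₀ → p) v` span a copy of the interval
module `I_{[p₀, n+1)}`, and the vectors mapped into `C` at the last index form a complementary
submodule whose last space has smaller dimension.

Uniqueness: an isomorphism preserves the ranks of all structure maps `M_p → M_q`, and for a
direct sum of interval modules this rank counts the intervals containing `[p, q]`. These counts
determine the multiplicity of every interval by inclusion–exclusion.
-/

open Module

namespace PersMod

variable {M N P : PersMod k n}

theorem map_map (M : PersMod k n) {i j l : Fin n} (hij : i ≤ j) (hjl : j ≤ l) (x : M.V i) :
    M.map hjl (M.map hij x) = M.map (hij.trans hjl) x :=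
  LinearMap.congr_fun (M.map_comp hij hjl) x

theorem Iso.refl (M : PersMod k n) : M.Iso M :=
  ⟨PersHom.idH M, PersHom.idH M, rfl, rfl⟩

theorem Iso.symm (h : M.Iso N) : N.Iso M :=
  let ⟨φ, ψ, hφψ, hψφ⟩ := h
  ⟨ψ, φ, hψφ, hφψ⟩

theorem Iso.exists_bijective (h : M.Iso N) :
    ∃ φ : PersHom M N, ∀ i, Function.Bijective (φ.app i) := by
  obtain ⟨φ, ψ, hφψ, hψφ⟩ := h
  refine ⟨φ, fun i => Function.bijective_iff_has_inverse.mpr ⟨ψ.app i, fun x => ?_, fun y => ?_⟩⟩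
  · exact LinearMap.congr_fun (congrFun (congrArg PersHom.app hψφ) i) x
  · exact LinearMap.congr_fun (congrFun (congrArg PersHom.app hφψ) i) y

theorem Iso.of_bijective (φ : PersHom M N) (hφ : ∀ i, Function.Bijective (φ.app i)) :
    M.Iso N := by
  let e i := LinearEquiv.ofBijective (φ.app i) (hφ i)
  refine ⟨φ, ⟨fun i => (e i).symm.toLinearMap, fun {i j} h => ?_⟩, ?_, ?_⟩
  · refine LinearMap.ext fun y => (e j).injective ?_
    change φ.app j (M.map h ((e i).symm y)) = e j ((e j).symm (N.map h y))
    rw [LinearEquiv.apply_symm_apply, ← LinearMap.comp_apply (φ.app j), ← φ.natural h]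
    exact congrArg (N.map h) ((e i).apply_symm_apply y)
  · ext i y
    exact (e i).apply_symm_apply y
  · ext i x
    exact (e i).symm_apply_apply x

theorem Iso.trans (h : M.Iso N) (h' : N.Iso P) : M.Iso P := by
  obtain ⟨φ, hφ⟩ := h.exists_bijective
  obtain ⟨ψ, hψ⟩ := h'.exists_bijective
  exact .of_bijective (ψ.compH φ) fun i => (hψ i).comp (hφ i)

theorem Iso.finrank_range_map_eq (h : M.Iso N) {i j : Fin n} (hij : i ≤ j) :
    finrank k (LinearMap.range (M.map hij)) = finrank k (LinearMap.range (N.map hij)) := by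
  obtain ⟨φ, hφ⟩ := h.exists_bijective
  have hrange : LinearMap.range (N.map hij) =
      (LinearMap.range (M.map hij)).map (φ.app j) := by
    rw [← LinearMap.range_comp, ← φ.natural hij, LinearMap.range_comp_of_range_eq_top]
    exact LinearMap.range_eq_top.mpr (hφ i).surjective
  rw [hrange]
  exact LinearEquiv.finrank_eq (Submodule.equivMapOfInjective _ (hφ j).injective _)

end PersMod

def rankInvariant (s : Multiset (ℕ × ℕ)) (p q : ℕ) : ℕ :=
  s.countP fun x => x.1 ≤ p ∧ q < x.2

theorem count_add_rankInvariant (s : Multiset (ℕ × ℕ)) (a b : ℕ) :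
    s.count (a + 1, b + 1) + rankInvariant s a b + rankInvariant s (a + 1) (b + 1) =
      rankInvariant s (a + 1) b + rankInvariant s a (b + 1) := by
  induction s using Multiset.induction_on with
  | empty => rfl
  | cons x s ih =>
    obtain ⟨c, d⟩ := x
    simp only [rankInvariant, Multiset.countP_cons, Multiset.count_cons, Prod.mk.injEq] at ih ⊢
    split_ifs <;> omega

theorem eq_of_rankInvariant_eq {s t : Multiset (ℕ × ℕ)} {N : ℕ}
    (hs : ∀ x ∈ s, 1 ≤ x.1 ∧ x.1 < x.2 ∧ x.2 ≤ N + 1)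
    (ht : ∀ x ∈ t, 1 ≤ x.1 ∧ x.1 < x.2 ∧ x.2 ≤ N + 1)
    (h : ∀ p q, 1 ≤ p → p ≤ q → q ≤ N → rankInvariant s p q = rankInvariant t p q) :
    s = t := by
  have hrank : ∀ p q, p ≤ q → rankInvariant s p q = rankInvariant t p q := by
    intro p q hpq
    by_cases hpN : 1 ≤ p ∧ q ≤ N
    · exact h p q hpN.1 hpq hpN.2
    · rw [rankInvariant, rankInvariant, Multiset.countP_eq_zero.mpr, Multiset.countP_eq_zero.mpr]
      · exact fun x hx => by have := ht x hx; omega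
      · exact fun x hx => by have := hs x hx; omega
  ext ⟨A, B⟩
  by_cases hAB : 1 ≤ A ∧ A < B
  · obtain ⟨a, rfl⟩ := Nat.exists_eq_add_of_le' hAB.1
    obtain ⟨b, rfl⟩ := Nat.exists_eq_add_of_le' (hAB.1.trans hAB.2.le)
    have hs' := count_add_rankInvariant s a b
    have ht' := count_add_rankInvariant t a b
    rw [hrank a b (by omega), hrank (a + 1) (b + 1) (by omega), hrank (a + 1) b (by omega),
      hrank a (b + 1) (by omega)] at hs'
    omega
  · rw [Multiset.count_eq_zero.mpr, Multiset.count_eq_zero.mpr]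
    · exact fun hx => hAB ⟨(ht _ hx).1, (ht _ hx).2.1⟩
    · exact fun hx => hAB ⟨(hs _ hx).1, (hs _ hx).2.1⟩

theorem intervalSpace_eq_top {a b : ℕ} {i : Fin n} (h : a ≤ (i : ℕ) + 1 ∧ (i : ℕ) + 1 < b) :
    intervalSpace k n a b i = ⊤ :=
  if_pos h

theorem mem_intervalSpace {a b : ℕ} {i : Fin n} (h : a ≤ (i : ℕ) + 1 ∧ (i : ℕ) + 1 < b) (c : k) :
    c ∈ intervalSpace k n a b i := by
  rw [intervalSpace_eq_top h]
  trivial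

theorem intervalSpace_coe_eq_zero {a b : ℕ} {i : Fin n}
    (h : ¬(a ≤ (i : ℕ) + 1 ∧ (i : ℕ) + 1 < b)) (x : intervalSpace k n a b i) : (x : k) = 0 := by
  simpa [intervalSpace, h] using x.2

instance (a b : ℕ) (i : Fin n) : FiniteDimensional k ((intervalMod k n a b).V i) :=
  inferInstanceAs (FiniteDimensional k (intervalSpace k n a b i))

theorem finrank_range_map_intervalMod (a b : ℕ) {i j : Fin n} (h : i ≤ j) :
    finrank k (LinearMap.range ((intervalMod k n a b).map h)) =
      if a ≤ (i : ℕ) + 1 ∧ (j : ℕ) + 1 < b then 1 else 0 := by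
  have hij : (i : ℕ) ≤ j := h
  split_ifs with hab
  · have hj : a ≤ (j : ℕ) + 1 ∧ (j : ℕ) + 1 < b := ⟨by omega, hab.2⟩
    have hsurj : Function.Surjective ((intervalMod k n a b).map h) :=
      fun (y : intervalSpace k n a b j) =>
        ⟨⟨y, mem_intervalSpace ⟨hab.1, by omega⟩ _⟩, Subtype.ext (if_pos hj)⟩
    rw [LinearMap.range_eq_top.mpr hsurj, finrank_top]
    change finrank k (intervalSpace k n a b j) = 1
    rw [intervalSpace_eq_top hj, finrank_top, finrank_self]
  · have hzero : (intervalMod k n a b).map h = 0 := by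
      refine LinearMap.ext fun (x : intervalSpace k n a b i) => Subtype.ext ?_
      change (if a ≤ (j : ℕ) + 1 ∧ (j : ℕ) + 1 < b then (x : k) else 0) = 0
      split_ifs with hj
      · exact intervalSpace_coe_eq_zero (fun hi => hab ⟨hi.1, hj.2⟩) x
      · rfl
    rw [hzero, LinearMap.range_zero, finrank_bot]

theorem finrank_range_map_dSum {g : ℕ} (F : Fin g → PersMod k n)
    [∀ l i, FiniteDimensional k ((F l).V i)] {i j : Fin n} (h : i ≤ j) :
    finrank k (LinearMap.range ((dSum F).map h)) =
      ∑ l, finrank k (LinearMap.range ((F l).map h)) := by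
  -- a surjection onto `Π l, range ((F l).map h)` followed by an injection
  change finrank k (LinearMap.range
    (LinearMap.piMap (fun l => (LinearMap.range ((F l).map h)).subtype)
      ∘ₗ LinearMap.piMap (fun l => ((F l).map h).rangeRestrict))) = _
  rw [LinearMap.range_comp_of_range_eq_top, LinearMap.finrank_range_of_inj,
    finrank_pi_fintype]
  · exact Function.Injective.piMap fun l => Subtype.val_injective
  · exact LinearMap.range_eq_top.mpr (Function.Surjective.piMap fun l =>
      LinearMap.surjective_rangeRestrict _)

theorem finrank_range_map_dSum_intervalMod {g : ℕ} (a b : Fin g → ℕ) {i j : Fin n}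
    (h : i ≤ j) :
    finrank k (LinearMap.range ((dSum fun l => intervalMod k n (a l) (b l)).map h)) =
      rankInvariant (Finset.univ.val.map fun l => (a l, b l)) ((i : ℕ) + 1) ((j : ℕ) + 1) := by
  rw [finrank_range_map_dSum, rankInvariant, Multiset.countP_map, ← Finset.filter_val,
    Finset.card_val, Finset.card_filter]
  exact Finset.sum_congr rfl fun l _ => finrank_range_map_intervalMod (a l) (b l) h

theorem intervals_eq_of_iso_dSum_intervalMod {g g' : ℕ} {a b : Fin g → ℕ} {a' b' : Fin g' → ℕ}
    (hab : ∀ j, 1 ≤ a j ∧ a j < b j ∧ b j ≤ n + 1)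
    (hab' : ∀ j, 1 ≤ a' j ∧ a' j < b' j ∧ b' j ≤ n + 1)
    (h : (dSum fun j => intervalMod k n (a j) (b j)).Iso
      (dSum fun j => intervalMod k n (a' j) (b' j))) :
    (Finset.univ.val.map fun j => (a j, b j)) = (Finset.univ.val.map fun j => (a' j, b' j)) := by
  refine eq_of_rankInvariant_eq (N := n) (by simpa using hab) (by simpa using hab')
    fun p q hp hpq hq => ?_
  obtain ⟨i, rfl⟩ : ∃ i : Fin n, (i : ℕ) + 1 = p := ⟨⟨p - 1, by omega⟩, by simp; omega⟩
  obtain ⟨j, rfl⟩ : ∃ j : Fin n, (j : ℕ) + 1 = q := ⟨⟨q - 1, by omega⟩, by simp; omega⟩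
  have hij : i ≤ j := Fin.le_def.mpr (by omega)
  rw [← finrank_range_map_dSum_intervalMod (k := k) a b hij,
    ← finrank_range_map_dSum_intervalMod (k := k) a' b' hij]
  exact h.finrank_range_map_eq hij

namespace PersMod

abbrev prod (M N : PersMod k n) : PersMod k n where
  V i := M.V i × N.V i
  map h := (M.map h).prodMap (N.map h)
  map_id i := by rw [M.map_id, N.map_id, LinearMap.prodMap_id]
  map_comp hij hjl := by rw [LinearMap.prodMap_comp, M.map_comp, N.map_comp]

def _root_.PersHom.coprod {M₁ M₂ N : PersMod k n} (φ : PersHom M₁ N) (ψ : PersHom M₂ N) :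
    PersHom (M₁.prod M₂) N where
  app i := (φ.app i).coprod (ψ.app i)
  natural h := LinearMap.ext fun ⟨x, y⟩ => (map_add (N.map h) _ _).trans
    congr($(LinearMap.congr_fun (φ.natural h) x) + $(LinearMap.congr_fun (ψ.natural h) y))

theorem Iso.prod {M₁ M₂ N₁ N₂ : PersMod k n} (h₁ : M₁.Iso N₁) (h₂ : M₂.Iso N₂) :
    (M₁.prod M₂).Iso (N₁.prod N₂) := by
  obtain ⟨φ, hφ⟩ := h₁.exists_bijective
  obtain ⟨ψ, hψ⟩ := h₂.exists_bijective
  exact .of_bijective ⟨fun i => (φ.app i).prodMap (ψ.app i), fun h => LinearMap.ext fun ⟨x, y⟩ =>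
    Prod.ext (LinearMap.congr_fun (φ.natural h) x) (LinearMap.congr_fun (ψ.natural h) y)⟩
    fun i => (hφ i).prodMap (hψ i)

theorem prod_iso_dSum_cons {g : ℕ} (X : PersMod k n) (F : Fin g → PersMod k n) :
    (X.prod (dSum F)).Iso (dSum (Fin.cons X F : Fin (g + 1) → PersMod k n)) :=
  .of_bijective ⟨fun i =>
    (Fin.consLinearEquiv k fun l => ((Fin.cons X F : Fin (g + 1) → PersMod k n) l).V i).toLinearMap,
    fun _ => LinearMap.ext fun ⟨_, _⟩ => funext fun l => by cases l using Fin.cases <;> rfl⟩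
    fun _ => LinearEquiv.bijective _

abbrev init (M : PersMod k (n + 1)) : PersMod k n where
  V i := M.V i.castSucc
  map h := M.map (Fin.castSucc_le_castSucc_iff.mpr h)
  map_id i := M.map_id i.castSucc
  map_comp _ _ := M.map_comp _ _

theorem Iso.of_init {M N : PersMod k (n + 1)} [Subsingleton (M.V (Fin.last n))]
    [Subsingleton (N.V (Fin.last n))] (h : M.init.Iso N.init) : M.Iso N := by
  obtain ⟨φ, hφ⟩ := h.exists_bijective
  refine .of_bijective
    ⟨fun i => Fin.lastCases (motive := fun i => M.V i →ₗ[k] N.V i) 0 φ.app i,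
      fun {i j} hij => ?_⟩ fun i => ?_
  · induction j using Fin.lastCases with
    | last => ext; exact Subsingleton.elim _ _
    | cast j =>
      induction i using Fin.lastCases with
      | last => exact absurd hij (not_le.mpr (Fin.castSucc_lt_last j))
      | cast i =>
        rw [Fin.lastCases_castSucc, Fin.lastCases_castSucc]
        exact φ.natural (Fin.castSucc_le_castSucc_iff.mp hij)
  · induction i using Fin.lastCases with
    | last =>
      exact ⟨fun _ _ _ => Subsingleton.elim _ _, fun _ => ⟨0, Subsingleton.elim _ _⟩⟩
    | cast i => dsimp only; rw [Fin.lastCases_castSucc]; exact hφ i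

abbrev sub (M : PersMod k n) (S : ∀ i, Submodule k (M.V i))
    (hS : ∀ {i j} (h : i ≤ j), S i ≤ (S j).comap (M.map h)) : PersMod k n where
  V i := S i
  map h := (M.map h).restrict (hS h)
  map_id i := LinearMap.ext fun x => Subtype.ext (LinearMap.congr_fun (M.map_id i) x)
  map_comp hij hjl := LinearMap.ext fun x => Subtype.ext (M.map_map hij hjl x)

def subι (M : PersMod k n) (S : ∀ i, Submodule k (M.V i))
    (hS : ∀ {i j} (h : i ≤ j), S i ≤ (S j).comap (M.map h)) : PersHom (M.sub S hS) M where
  app i := (S i).subtype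
  natural _ := rfl

theorem comap_map_last_le (M : PersMod k (n + 1)) (C : Submodule k (M.V (Fin.last n)))
    {i j : Fin (n + 1)} (h : i ≤ j) :
    C.comap (M.map (Fin.le_last i)) ≤ (C.comap (M.map (Fin.le_last j))).comap (M.map h) :=
  fun x hx => by rwa [Submodule.mem_comap, Submodule.mem_comap, map_map]

abbrev comapLast (M : PersMod k (n + 1)) (C : Submodule k (M.V (Fin.last n))) :
    PersMod k (n + 1) :=
  M.sub (fun i => C.comap (M.map (Fin.le_last i))) (M.comap_map_last_le C)

theorem finrank_comapLast_last (M : PersMod k (n + 1)) (C : Submodule k (M.V (Fin.last n))) :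
    finrank k ((M.comapLast C).V (Fin.last n)) = finrank k C := by
  change finrank k (C.comap (M.map (le_refl _))) = _
  rw [M.map_id, Submodule.comap_id]

/-- The morphism `I_{[p+1, n+1)} → M` sending `1` to `v` at the (`0`-based) index `p`. -/
def intervalHom (M : PersMod k n) {p : Fin n} (v : M.V p) :
    PersHom (intervalMod k n ((p : ℕ) + 1) (n + 1)) M where
  app q := LinearMap.toSpanSingleton k _ (if h : p ≤ q then M.map h v else 0) ∘ₗ
    (intervalSpace k n _ _ q).subtype
  natural {q r} hqr := by
    refine LinearMap.ext fun (x : intervalSpace k n _ _ q) => ?_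
    change M.map hqr ((x : k) • dite _ _ _) = (if _ then (x : k) else 0) • dite _ _ _
    have hqr' : (q : ℕ) ≤ r := hqr
    by_cases hpq : p ≤ q
    · have hpq' : (p : ℕ) ≤ q := hpq
      rw [dif_pos hpq, dif_pos (hpq.trans hqr), if_pos ⟨by omega, by omega⟩, map_smul, map_map]
    · rw [intervalSpace_coe_eq_zero (fun h => hpq (Fin.le_def.mpr (by omega))) x, zero_smul,
        map_zero, ite_self, zero_smul]

theorem _root_.LinearMap.bijective_coprod_toSpanSingleton_comap {V W : Type*} [AddCommGroup V]
    [Module k V] [AddCommGroup W] [Module k W] (L : V →ₗ[k] W) {w : V} (hw : L w ≠ 0)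
    {C : Submodule k W} (hC : IsCompl (k ∙ L w) C) :
    Function.Bijective ((LinearMap.toSpanSingleton k V w).coprod (C.comap L).subtype) := by
  constructor
  · rw [← LinearMap.ker_eq_bot, LinearMap.ker_eq_bot']
    rintro ⟨c, y⟩ hcy
    replace hcy : c • w + (y : V) = 0 := hcy
    have hsmul_mem : c • L w ∈ C := by
      rw [← map_smul, eq_neg_of_add_eq_zero_left hcy, map_neg]
      exact C.neg_mem y.2
    have hc : c = 0 := by
      have := hC.disjoint.le_bot ⟨Submodule.smul_mem _ c (Submodule.mem_span_singleton_self _),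
        hsmul_mem⟩
      exact (smul_eq_zero.mp ((Submodule.mem_bot k).mp this)).resolve_right hw
    subst hc
    rw [zero_smul, zero_add] at hcy
    exact Prod.ext rfl (Subtype.ext hcy)
  · intro z
    obtain ⟨_, hy, c', hc', hsum⟩ := Submodule.mem_sup.mp
      (hC.sup_eq_top ▸ Submodule.mem_top : L z ∈ (k ∙ L w) ⊔ C)
    obtain ⟨c, rfl⟩ := Submodule.mem_span_singleton.mp hy
    refine ⟨(c, ⟨z - c • w, ?_⟩), ?_⟩
    · rw [Submodule.mem_comap, map_sub, map_smul, ← hsum, add_sub_cancel_left]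
      exact hc'
    · simp

theorem intervalMod_prod_comapLast_iso (M : PersMod k (n + 1)) {p₀ : Fin (n + 1)} (v : M.V p₀)
    (hv : M.map (Fin.le_last p₀) v ≠ 0) (hlow : ∀ p, ¬p₀ ≤ p → M.map (Fin.le_last p) = 0)
    {C : Submodule k (M.V (Fin.last n))} (hC : IsCompl (k ∙ M.map (Fin.le_last p₀) v) C) :
    ((intervalMod k (n + 1) ((p₀ : ℕ) + 1) (n + 1 + 1)).prod (M.comapLast C)).Iso M := by
  refine .of_bijective ((M.intervalHom v).coprod (M.subι _ (M.comap_map_last_le C))) fun p => ?_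
  by_cases hp : p₀ ≤ p
  · have hL : M.map (Fin.le_last p) (M.map hp v) = M.map (Fin.le_last p₀) v := M.map_map _ _ v
    have hval : Function.Bijective
        (Subtype.val : intervalSpace k (n + 1) (p₀ + 1) (n + 1 + 1) p → k) :=
      ⟨Subtype.val_injective, fun c => ⟨⟨c, mem_intervalSpace
        ⟨by have : (p₀ : ℕ) ≤ p := hp; omega, by omega⟩ c⟩, rfl⟩⟩
    have happ : ⇑(((M.intervalHom v).coprod (M.subι _ (M.comap_map_last_le C))).app p) =
        ⇑((LinearMap.toSpanSingleton k _ (M.map hp v)).coprod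
          (C.comap (M.map (Fin.le_last p))).subtype) ∘ Prod.map Subtype.val id := by
      funext ⟨x, y⟩
      change Subtype.val x • dite _ _ _ + (y : M.V p) = Subtype.val x • M.map hp v + y
      rw [dif_pos hp]
    rw [happ]
    exact (LinearMap.bijective_coprod_toSpanSingleton_comap (M.map (Fin.le_last p))
      (hL ▸ hv) (hL ▸ hC)).comp (hval.prodMap Function.bijective_id)
  · have happ : ∀ x y,
        ((M.intervalHom v).coprod (M.subι _ (M.comap_map_last_le C))).app p (x, y) = y := by
      intro x y
      change Subtype.val x • dite _ _ _ + (y : M.V p) = y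
      rw [dif_neg hp, smul_zero, zero_add]
    have hx : ∀ x : intervalSpace k (n + 1) (p₀ + 1) (n + 1 + 1) p, x = 0 := fun x =>
      Subtype.ext (intervalSpace_coe_eq_zero (fun h => hp (Fin.le_def.mpr (by omega))) x)
    refine ⟨fun ⟨x, y⟩ ⟨x', y'⟩ h => ?_, fun z => ⟨(0, ⟨z, ?_⟩), happ _ _⟩⟩
    · rw [happ, happ] at h
      exact Prod.ext ((hx x).trans (hx x').symm) (Subtype.ext h)
    · rw [Submodule.mem_comap, hlow p hp, LinearMap.zero_apply]
      exact C.zero_mem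

end PersMod

namespace PersMod

variable {M N : PersMod k n}

theorem exists_intervalMod_prod_comapLast_iso (M : PersMod k (n + 1))
    [FiniteDimensional k (M.V (Fin.last n))] [Nontrivial (M.V (Fin.last n))] :
    ∃ (p₀ : Fin (n + 1)) (C : Submodule k (M.V (Fin.last n))),
      finrank k C + 1 = finrank k (M.V (Fin.last n)) ∧
      ((intervalMod k (n + 1) ((p₀ : ℕ) + 1) (n + 1 + 1)).prod (M.comapLast C)).Iso M := by
  have hlast : M.map (Fin.le_last (Fin.last n)) ≠ 0 := by
    rw [M.map_id]
    obtain ⟨x, hx⟩ := exists_ne (0 : M.V (Fin.last n))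
    exact fun h => hx (LinearMap.congr_fun h x)
  obtain ⟨p₀, hp₀, hmin⟩ :=
    wellFounded_lt.has_min {p | M.map (Fin.le_last p) ≠ 0} ⟨Fin.last n, hlast⟩
  have hlow : ∀ p, ¬p₀ ≤ p → M.map (Fin.le_last p) = 0 := fun p hp =>
    not_not.mp fun hne => hmin p hne (not_le.mp hp)
  obtain ⟨v, hv⟩ : ∃ v, M.map (Fin.le_last p₀) v ≠ 0 := by
    by_contra! h
    exact hp₀ (LinearMap.ext h)
  obtain ⟨C, hC⟩ := Submodule.exists_isCompl (k ∙ M.map (Fin.le_last p₀) v)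
  refine ⟨p₀, C, ?_, M.intervalMod_prod_comapLast_iso v hv hlow hC⟩
  rw [← Submodule.finrank_add_eq_of_isCompl hC, finrank_span_singleton hv, add_comm]

def IsIntervalDecomposable (M : PersMod k n) : Prop :=
  ∃ (g : ℕ) (a b : Fin g → ℕ), (∀ j, 1 ≤ a j ∧ a j < b j ∧ b j ≤ n + 1) ∧
    M.Iso (dSum fun j => intervalMod k n (a j) (b j))

theorem IsIntervalDecomposable.of_iso (h : M.Iso N) (hN : N.IsIntervalDecomposable) :
    M.IsIntervalDecomposable :=
  let ⟨g, a, b, hab, hN⟩ := hN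
  ⟨g, a, b, hab, h.trans hN⟩

theorem isIntervalDecomposable_of_fin_zero (M : PersMod k 0) : M.IsIntervalDecomposable :=
  ⟨0, Fin.elim0, Fin.elim0, fun j => j.elim0,
    .of_bijective ⟨fun i => i.elim0, fun {i} => i.elim0⟩ fun i => i.elim0⟩

theorem IsIntervalDecomposable.intervalMod_prod (hM : M.IsIntervalDecomposable) {A B : ℕ}
    (hAB : 1 ≤ A ∧ A < B ∧ B ≤ n + 1) : ((intervalMod k n A B).prod M).IsIntervalDecomposable := by
  obtain ⟨g, a, b, hab, hM⟩ := hM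
  refine ⟨g + 1, Fin.cons A a, Fin.cons B b, Fin.cases hAB hab, ?_⟩
  have hcons : (fun j => intervalMod k n ((Fin.cons A a : Fin (g + 1) → ℕ) j)
      ((Fin.cons B b : Fin (g + 1) → ℕ) j)) =
      Fin.cons (intervalMod k n A B) fun j => intervalMod k n (a j) (b j) :=
    funext fun j => by cases j using Fin.cases <;> rfl
  rw [hcons]
  exact ((Iso.refl _).prod hM).trans (prod_iso_dSum_cons _ _)

theorem IsIntervalDecomposable.of_init {M : PersMod k (n + 1)} [Subsingleton (M.V (Fin.last n))]
    (hM : M.init.IsIntervalDecomposable) : M.IsIntervalDecomposable := by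
  obtain ⟨g, a, b, hab, hM⟩ := hM
  have : Subsingleton ((dSum fun j => intervalMod k (n + 1) (a j) (b j)).V (Fin.last n)) :=
    ⟨fun x y => funext fun j => Subtype.ext <| by
      have hj : ¬(a j ≤ n + 1 ∧ n + 1 < b j) := by have := hab j; omega
      rw [intervalSpace_coe_eq_zero hj (x j), intervalSpace_coe_eq_zero hj (y j)]⟩
  -- `init` of a sum of interval modules over `Fin (n + 1)` is definitionally the sum over `Fin n`
  exact ⟨g, a, b, fun j => ⟨(hab j).1, (hab j).2.1, by have := hab j; omega⟩, Iso.of_init hM⟩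

theorem isIntervalDecomposable (M : PersMod k n) [∀ i, FiniteDimensional k (M.V i)] :
    M.IsIntervalDecomposable := by
  induction n with
  | zero => exact isIntervalDecomposable_of_fin_zero M
  | succ n ih =>
    obtain ⟨d, hd⟩ : ∃ d, finrank k (M.V (Fin.last n)) = d := ⟨_, rfl⟩
    induction d generalizing M with
    | zero =>
      have : Subsingleton (M.V (Fin.last n)) := finrank_zero_iff.mp hd
      exact .of_init (ih M.init)
    | succ d ihd =>
      have : Nontrivial (M.V (Fin.last n)) := finrank_pos_iff (R := k).mp (by omega)
      obtain ⟨p₀, C, hC, hiso⟩ := M.exists_intervalMod_prod_comapLast_iso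
      have hC' : finrank k ((M.comapLast C).V (Fin.last n)) = d := by
        rw [finrank_comapLast_last]
        omega
      exact ((ihd _ hC').intervalMod_prod ⟨by omega, by omega, le_rfl⟩).of_iso hiso.symm

end PersMod

/-- Structure theorem for pointwise finite-dimensional persistence modules
over `{1, …, n}`: every such module is isomorphic to a finite direct sum of
interval modules `⨁_j I_{[a_j,b_j)}`, and the multiset of intervals is
uniquely determined by the module up to isomorphism. -/
theorem persistence_structure_theorem (k : Type) [Field k] (n : ℕ)
    (M : PersMod k n) [∀ i, FiniteDimensional k (M.V i)] :
    ∃ (g : ℕ) (a b : Fin g → ℕ),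
      (∀ j, 1 ≤ a j ∧ a j < b j ∧ b j ≤ n + 1) ∧
      PersMod.Iso M (dSum fun j => intervalMod k n (a j) (b j)) ∧
      ∀ (g' : ℕ) (a' b' : Fin g' → ℕ),
        (∀ j, 1 ≤ a' j ∧ a' j < b' j ∧ b' j ≤ n + 1) →
        PersMod.Iso M (dSum fun j => intervalMod k n (a' j) (b' j)) →
        (Finset.univ.val.map fun j => (a j, b j)) =
          (Finset.univ.val.map fun j => (a' j, b' j)) := by
  obtain ⟨g, a, b, hab, hiso⟩ := M.isIntervalDecomposable
  exact ⟨g, a, b, hab, hiso, fun g' a' b' hab' hiso' =>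
    intervals_eq_of_iso_dSum_intervalMod hab hab' (hiso.symm.trans hiso')⟩
end

section
/- The multiset of intervals in the interval decomposition of a persistence module M over {1,…,n} is determined by the ranks of the structure maps: the number of intervals [a,b) in the decomposition equals rank(M_a → M_{b-1}) − rank(M_{a-1} → M_{b-1}) − rank(M_a → M_b) + rank(M_{a-1} → M_b), where M_0 = 0 and M_{n+1} = 0 and M_i → M_j denotes the composite structure map for i ≤ j. -/
variable {k : Type} [Field k] {n : ℕ}

/-- The rank of the composite structure map `M_i → M_j` (1-based indices),
with the conventions `M_0 = 0` and `M_{n+1} = 0` (rank `0` outside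
`1 ≤ i ≤ j ≤ n`). -/
noncomputable def PersMod.rk (M : PersMod k n) (i j : ℕ) : ℕ :=
  if h : 1 ≤ i ∧ i ≤ j ∧ j ≤ n then
    Module.finrank k
      ↥(LinearMap.range (M.map (show (⟨i - 1, by omega⟩ : Fin n) ≤ ⟨j - 1, by omega⟩
          from Fin.mk_le_mk.mpr (by omega))))
  else 0


/-!
Ranks of structure maps are invariant under isomorphism and additive over direct sums, and for an
interval module `I_{[c,d)}` the rank of `M_i → M_j` is `1` exactly when `c ≤ i ≤ j < d`. So the
alternating sum of ranks is additive, and on `I_{[c,d)}` it is an inclusion–exclusion: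
`rank(M_a → M_{b-1}) - rank(M_{a-1} → M_{b-1})` detects `c = a, d ≥ b`, and subtracting the same
difference at `b` leaves `c = a, d = b`. Since `1 ≤ c` and `d ≤ n + 1`, the conventions
`M_0 = M_{n+1} = 0` do not interfere.
-/

section Ranks

open Module LinearMap

variable {K V V' W W' : Type*} [Field K] [AddCommGroup V] [Module K V] [AddCommGroup V']
  [Module K V'] [AddCommGroup W] [Module K W] [AddCommGroup W'] [Module K W']

lemma LinearMap.finrank_range_equiv_comp_comp_equiv (f : V →ₗ[K] W) (e₁ : V' ≃ₗ[K] V)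
    (e₂ : W ≃ₗ[K] W') :
    finrank K (range (e₂.toLinearMap ∘ₗ f ∘ₗ e₁.toLinearMap)) = finrank K (range f) := by
  rw [range_comp, range_comp, LinearEquiv.range, Submodule.map_top,
    LinearEquiv.finrank_map_eq]

lemma LinearMap.finrank_range_piMap {ι : Type*} [Fintype ι] {A B : ι → Type*}
    [∀ l, AddCommGroup (A l)] [∀ l, Module K (A l)] [∀ l, AddCommGroup (B l)]
    [∀ l, Module K (B l)] [∀ l, FiniteDimensional K (B l)] (f : ∀ l, A l →ₗ[K] B l) :
    finrank K (range (piMap f)) = ∑ l, finrank K (range (f l)) := by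
  have hfactor : piMap f = piMap (fun l => (range (f l)).subtype) ∘ₗ
      piMap (fun l => (f l).rangeRestrict) := rfl
  have hsurj : range (piMap fun l => (f l).rangeRestrict) = ⊤ :=
    range_eq_top.2 <| Function.Surjective.piMap fun l => (f l).surjective_rangeRestrict
  rw [hfactor, range_comp_of_range_eq_top _ hsurj,
    finrank_range_of_inj (Function.Injective.piMap fun l => Subtype.val_injective),
    finrank_pi_fintype]

end Ranks

namespace PersMod

variable {k : Type} [Field k] {n : ℕ}

lemma Iso.exists_linearEquiv {M N : PersMod k n} (h : M.Iso N) :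
    ∃ e : ∀ i, M.V i ≃ₗ[k] N.V i, ∀ {i j : Fin n} (hij : i ≤ j),
      N.map hij = (e j).toLinearMap ∘ₗ M.map hij ∘ₗ (e i).symm.toLinearMap := by
  obtain ⟨φ, ψ, hφψ, hψφ⟩ := h
  have hφψ' (i) : (φ.app i).comp (ψ.app i) = LinearMap.id := congrFun (congrArg PersHom.app hφψ) i
  have hψφ' (i) : (ψ.app i).comp (φ.app i) = LinearMap.id := congrFun (congrArg PersHom.app hψφ) i
  refine ⟨fun i => .ofLinearMap (φ.app i) (ψ.app i) (hφψ' i) (hψφ' i), fun {i j} hij => ?_⟩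
  change N.map hij = φ.app j ∘ₗ M.map hij ∘ₗ ψ.app i
  rw [← LinearMap.comp_assoc, ← φ.natural, LinearMap.comp_assoc, hφψ', LinearMap.comp_id]

lemma rk_eq_of_iso {M N : PersMod k n} (h : M.Iso N) (i j : ℕ) : M.rk i j = N.rk i j := by
  obtain ⟨e, he⟩ := h.exists_linearEquiv
  unfold rk
  split_ifs
  · rw [he, LinearMap.finrank_range_equiv_comp_comp_equiv]
  · rfl

lemma rk_dSum {g : ℕ} (F : Fin g → PersMod k n) [∀ l i, FiniteDimensional k ((F l).V i)]
    (i j : ℕ) : (dSum F).rk i j = ∑ l, (F l).rk i j := by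
  unfold rk
  split_ifs
  · exact LinearMap.finrank_range_piMap fun l => (F l).map _
  · simp

instance (a b : ℕ) (i : Fin n) : FiniteDimensional k ((intervalMod k n a b).V i) :=
  inferInstanceAs (FiniteDimensional k (intervalSpace k n a b i))

lemma finrank_intervalMod (a b : ℕ) (i : Fin n) :
    Module.finrank k ((intervalMod k n a b).V i) =
      if a ≤ (i : ℕ) + 1 ∧ (i : ℕ) + 1 < b then 1 else 0 := by
  change Module.finrank k (intervalSpace k n a b i) = _
  by_cases h : a ≤ (i : ℕ) + 1 ∧ (i : ℕ) + 1 < b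
  · rw [intervalSpace, if_pos h, if_pos h, finrank_top, Module.finrank_self]
  · rw [intervalSpace, if_neg h, if_neg h, finrank_bot]

lemma rk_intervalMod (a b i j : ℕ) :
    (intervalMod k n a b).rk i j =
      if 1 ≤ i ∧ i ≤ j ∧ j ≤ n ∧ a ≤ i ∧ j < b then 1 else 0 := by
  by_cases hij : 1 ≤ i ∧ i ≤ j ∧ j ≤ n
  swap
  · rw [rk, dif_neg hij, if_neg (by tauto)]
  rw [rk, dif_pos hij]
  set f := (intervalMod k n a b).map (Fin.mk_le_mk.mpr (by omega) :
    (⟨i - 1, by omega⟩ : Fin n) ≤ ⟨j - 1, by omega⟩)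
  split_ifs with hab
  · have hsurj : LinearMap.range f = ⊤ := LinearMap.range_eq_top.2 fun y =>
      ⟨⟨y.1, by rw [intervalSpace, if_pos (by simp only; omega)]; trivial⟩,
        Subtype.ext (if_pos (by simp only; omega))⟩
    rw [hsurj, finrank_top, finrank_intervalMod, if_pos (by simp only; omega)]
  · have hsrc := (LinearMap.finrank_range_le f).trans_eq (finrank_intervalMod a b _)
    have htgt := (Submodule.finrank_le (LinearMap.range f)).trans_eq (finrank_intervalMod a b _)
    simp only at hsrc htgt
    split_ifs at hsrc htgt <;> omega

noncomputable def multiplicity (M : PersMod k n) (a b : ℕ) : ℤ :=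
  (M.rk a (b - 1) : ℤ) - M.rk (a - 1) (b - 1) - M.rk a b + M.rk (a - 1) b

lemma multiplicity_eq_of_iso {M N : PersMod k n} (h : M.Iso N) (a b : ℕ) :
    M.multiplicity a b = N.multiplicity a b := by
  simp only [multiplicity, rk_eq_of_iso h]

lemma multiplicity_dSum {g : ℕ} (F : Fin g → PersMod k n)
    [∀ l i, FiniteDimensional k ((F l).V i)] (a b : ℕ) :
    (dSum F).multiplicity a b = ∑ l, (F l).multiplicity a b := by
  simp only [multiplicity, rk_dSum, Nat.cast_sum, ← Finset.sum_sub_distrib,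
    ← Finset.sum_add_distrib]

lemma multiplicity_intervalMod {a b : ℕ} (ha : 1 ≤ a) (hb : b ≤ n + 1) {a' b' : ℕ}
    (hab' : a' < b') :
    (intervalMod k n a b).multiplicity a' b' = if a = a' ∧ b = b' then 1 else 0 := by
  simp only [multiplicity, rk_intervalMod]
  split_ifs <;> omega

end PersMod

theorem interval_multiplicity_eq_rank_formula_general (k : Type) [Field k] (n : ℕ)
    (M : PersMod k n)
    (g : ℕ) (a b : Fin g → ℕ)
    (hval : ∀ j, 1 ≤ a j ∧ a j < b j ∧ b j ≤ n + 1)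
    (hiso : PersMod.Iso M (dSum fun j => intervalMod k n (a j) (b j)))
    (aa bb : ℕ) (h2 : aa < bb) :
    ((Finset.univ.filter fun j => a j = aa ∧ b j = bb).card : ℤ) =
      (M.rk aa (bb - 1) : ℤ) - M.rk (aa - 1) (bb - 1)
        - M.rk aa bb + M.rk (aa - 1) bb := by
  calc ((Finset.univ.filter fun j => a j = aa ∧ b j = bb).card : ℤ)
      = ∑ j, (intervalMod k n (a j) (b j)).multiplicity aa bb := by
        rw [Finset.natCast_card_filter]
        exact Finset.sum_congr rfl fun j _ =>
          (PersMod.multiplicity_intervalMod (hval j).1 (hval j).2.2 h2).symm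
    _ = M.multiplicity aa bb := by
        rw [← PersMod.multiplicity_dSum, PersMod.multiplicity_eq_of_iso hiso]

/-- The multiset of intervals in the interval decomposition of a persistence
module `M` over `{1, …, n}` is determined by the ranks of the structure maps:
the number of intervals `[a,b)` equals
`rank(M_a → M_{b-1}) − rank(M_{a-1} → M_{b-1}) − rank(M_a → M_b) + rank(M_{a-1} → M_b)`,
with `M_0 = M_{n+1} = 0`. -/
theorem interval_multiplicity_eq_rank_formula (k : Type) [Field k] (n : ℕ)
    (M : PersMod k n) [∀ i, FiniteDimensional k (M.V i)]
    (g : ℕ) (a b : Fin g → ℕ)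
    (hval : ∀ j, 1 ≤ a j ∧ a j < b j ∧ b j ≤ n + 1)
    (hiso : PersMod.Iso M (dSum fun j => intervalMod k n (a j) (b j)))
    (aa bb : ℕ) (h1 : 1 ≤ aa) (h2 : aa < bb) (h3 : bb ≤ n + 1) :
    ((Finset.univ.filter fun j => a j = aa ∧ b j = bb).card : ℤ) =
      (M.rk aa (bb - 1) : ℤ) - M.rk (aa - 1) (bb - 1)
        - M.rk aa bb + M.rk (aa - 1) bb :=
  interval_multiplicity_eq_rank_formula_general k n M g a b hval hiso aa bb h2
end

section
/- Let A be a matrix over ℤ/2 and suppose A is reduced by the standard left-to-right column reduction (repeatedly adding an earlier column with the same pivot), yielding reduced matrix R. Then every column that is ever added to another column during the reduction is itself already fully reduced, i.e. equals the corresponding column of R. -/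
/-! After the move `(i, j)`, every later move modifies a column `≥ j > i`, so column `i` is
never changed again and already has its final value. -/

/-- The pivot of a column vector over `ℤ/2`: the largest row index with a
nonzero entry (`⊥` for the zero column). -/
def pivot {r : ℕ} (v : Fin r → ZMod 2) : WithBot (Fin r) :=
  (Finset.univ.filter fun i => v i ≠ 0).max

/-- One column operation: add column `mv.1` to column `mv.2`.  A matrix is
represented by its family of columns. -/
def applyMove {m r : ℕ} (C : Fin m → Fin r → ZMod 2) (mv : Fin m × Fin m) :
    Fin m → Fin r → ZMod 2 :=
  Function.update C mv.2 (C mv.2 + C mv.1)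

/-- A matrix (given by its columns) is reduced if its nonzero columns have
pairwise distinct pivots. -/
def Reduced {m r : ℕ} (C : Fin m → Fin r → ZMod 2) : Prop :=
  ∀ j j', j ≠ j' → C j ≠ 0 → C j' ≠ 0 → pivot (C j) ≠ pivot (C j')

/-- A valid execution of the standard left-to-right column reduction from `C`
to `R`: each move adds an earlier column `i` with the same (nonzero) pivot to a
later column `j`, and the sequence of modified columns is processed left to
right (all later moves modify columns `≥ j`). -/
inductive ValidTrace {m r : ℕ} :
    (Fin m → Fin r → ZMod 2) → List (Fin m × Fin m) →
      (Fin m → Fin r → ZMod 2) → Prop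
  | nil (C : Fin m → Fin r → ZMod 2) : ValidTrace C [] C
  | cons {C R : Fin m → Fin r → ZMod 2} {i j : Fin m} {L : List (Fin m × Fin m)}
      (hlt : i < j)
      (hpiv : pivot (C i) = pivot (C j))
      (hne : pivot (C j) ≠ ⊥)
      (hmono : ∀ mv ∈ L, j ≤ mv.2)
      (htail : ValidTrace (applyMove C (i, j)) L R) :
      ValidTrace C ((i, j) :: L) R

theorem foldl_applyMove_apply_of_forall_ne {m r : ℕ} (C : Fin m → Fin r → ZMod 2)
    {L : List (Fin m × Fin m)} {k : Fin m} (h : ∀ mv ∈ L, mv.2 ≠ k) :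
    L.foldl applyMove C k = C k := by
  induction L generalizing C with
  | nil => rfl
  | cons mv L ih =>
    rw [List.foldl_cons, ih _ fun mv' hmv' => h mv' (List.mem_cons_of_mem _ hmv')]
    exact Function.update_of_ne (h mv List.mem_cons_self).symm _ _

namespace ValidTrace

variable {m r : ℕ} {C R : Fin m → Fin r → ZMod 2}

theorem foldl_eq {L : List (Fin m × Fin m)} (h : ValidTrace C L R) :
    L.foldl applyMove C = R := by
  induction h with
  | nil => rfl
  | cons _ _ _ _ _ ih => exact ih

theorem of_append {L₁ L₂ : List (Fin m × Fin m)} (h : ValidTrace C (L₁ ++ L₂) R) :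
    ValidTrace (L₁.foldl applyMove C) L₂ R := by
  induction L₁ generalizing C with
  | nil => exact h
  | cons mv L₁ ih =>
    cases h with
    | cons _ _ _ _ htail => exact ih htail

theorem apply_fst_eq {i j : Fin m} {L : List (Fin m × Fin m)}
    (h : ValidTrace C ((i, j) :: L) R) : R i = C i := by
  cases h with
  | cons hlt _ _ hmono htail =>
    rw [← htail.foldl_eq, foldl_applyMove_apply_of_forall_ne _
      fun mv hmv => (hlt.trans_le (hmono mv hmv)).ne']
    exact Function.update_of_ne hlt.ne _ _

end ValidTrace

theorem added_column_is_reduced_general {m r : ℕ} (A : Fin m → Fin r → ZMod 2)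
    (L : List (Fin m × Fin m)) (R : Fin m → Fin r → ZMod 2)
    (htrace : ValidTrace A L R)
    (L1 L2 : List (Fin m × Fin m)) (i j : Fin m)
    (hsplit : L = L1 ++ (i, j) :: L2) :
    List.foldl applyMove A L1 i = R i := by
  subst hsplit
  exact htrace.of_append.apply_fst_eq.symm

/-- In the standard left-to-right column reduction of a matrix `A` over `ℤ/2`
yielding a reduced matrix `R`, every column that is ever added to another
column is itself already fully reduced: at the moment the addition
`c_j ← c_j + c_i` happens, column `i` equals the corresponding column of
`R`. -/
theorem added_column_is_reduced {m r : ℕ} (A : Fin m → Fin r → ZMod 2)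
    (L : List (Fin m × Fin m)) (R : Fin m → Fin r → ZMod 2)
    (htrace : ValidTrace A L R) (hred : Reduced R)
    (L1 L2 : List (Fin m × Fin m)) (i j : Fin m)
    (hsplit : L = L1 ++ (i, j) :: L2) :
    List.foldl applyMove A L1 i = R i :=
  added_column_is_reduced_general A L R htrace L1 L2 i j hsplit
end

section
/- Let R be the reduced boundary matrix obtained from the dimension-p boundary matrix ∂ of a filtered simplicial complex K₁ ⊆ ⋯ ⊆ Kₙ = K (columns indexed by (p+1)-simplices in filtration order, rows by p-simplices in filtration order). For each nonzero column of R with pivot row corresponding to p-simplex τ and column corresponding to (p+1)-simplex σ, attach the bar [b, d) where b is the minimal index with τ ∈ K_b and d the minimal index with σ ∈ K_d. Then the nonzero columns of R, with these attached bars, form a barcode basis of Z_p(K), assuming H_p(K) = 0. -/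
/-- An abstract simplicial complex on vertex type `V`: a collection of finite
subsets of `V` (the simplices) closed under taking subsets. -/
structure SimpComplex (V : Type) [DecidableEq V] where
  faces : Set (Finset V)
  down_closed : ∀ s ∈ faces, ∀ t ⊆ s, t ∈ faces

variable {V : Type} [DecidableEq V]

/-- The `p`-simplices of `K` (sets of cardinality `p+1`). -/
def SimpComplex.simplices (K : SimpComplex V) (p : ℕ) : Type :=
  {s : Finset V // s ∈ K.faces ∧ s.card = p + 1}

/-- The `p`-th chain group of `K` with `ℤ/2` coefficients. -/
def SimpComplex.Chain (K : SimpComplex V) (p : ℕ) : Type :=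
  K.simplices p →₀ ZMod 2

noncomputable instance (K : SimpComplex V) (p : ℕ) : AddCommGroup (K.Chain p) :=
  inferInstanceAs (AddCommGroup ((K.simplices p) →₀ ZMod 2))

noncomputable instance (K : SimpComplex V) (p : ℕ) : Module (ZMod 2) (K.Chain p) :=
  inferInstanceAs (Module (ZMod 2) ((K.simplices p) →₀ ZMod 2))

/-- The sum of the facets ((p)-dimensional faces) of a `(p+1)`-simplex. -/
noncomputable def SimpComplex.facetSum (K : SimpComplex V) (p : ℕ)
    (σ : K.simplices (p + 1)) : K.Chain p :=
  ∑ v ∈ σ.1.attach,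
    Finsupp.single
      ⟨σ.1.erase v.1,
        K.down_closed _ σ.2.1 _ (Finset.erase_subset _ _),
        by rw [Finset.card_erase_of_mem v.2, σ.2.2]; rfl⟩ (1 : ZMod 2)

/-- The boundary map `∂_p : C_p(K) → C_{p-1}(K)`, extended linearly from
simplices; `∂_0` is the zero map. -/
noncomputable def SimpComplex.boundary (K : SimpComplex V) :
    ∀ p : ℕ, K.Chain p →ₗ[ZMod 2] K.Chain (p - 1)
  | 0 => 0
  | (q + 1) => Finsupp.linearCombination (ZMod 2) (K.facetSum q)


/-- The space of `p`-cycles `Z_p(K) = ker ∂_p`. -/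
noncomputable def SimpComplex.cycles (K : SimpComplex V) (p : ℕ) :
    Submodule (ZMod 2) (K.Chain p) :=
  LinearMap.ker (K.boundary p)

/-- The space of `p`-boundaries `B_p(K) = im ∂_{p+1}`. -/
noncomputable def SimpComplex.boundaries (K : SimpComplex V) (p : ℕ) :
    Submodule (ZMod 2) (K.Chain p) :=
  LinearMap.range (K.boundary (p + 1))

/-- The cycles of the subcomplex with faces `S`, viewed inside `C_p(K)`:
chains supported on `S` with vanishing boundary. -/
noncomputable def SimpComplex.cyclesOf (K : SimpComplex V) (S : Set (Finset V))
    (p : ℕ) : Submodule (ZMod 2) (K.Chain p) :=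
  Finsupp.supported (ZMod 2) (ZMod 2) {σ : K.simplices p | σ.1 ∈ S} ⊓
    LinearMap.ker (K.boundary p)

/-- The boundaries of the subcomplex with faces `S`, viewed inside `C_p(K)`:
boundaries of `(p+1)`-chains supported on `S`. -/
noncomputable def SimpComplex.boundariesOf (K : SimpComplex V)
    (S : Set (Finset V)) (p : ℕ) : Submodule (ZMod 2) (K.Chain p) :=
  (Finsupp.supported (ZMod 2) (ZMod 2)
    {τ : K.simplices (p + 1) | τ.1 ∈ S}).map (K.boundary (p + 1))

/-- The chain corresponding to a column vector, via an ordering `e0` of the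
`p`-simplices. -/
noncomputable def toChain (K : SimpComplex V) (p n0 : ℕ)
    (e0 : Fin n0 ≃ K.simplices p) (v : Fin n0 → ZMod 2) : K.Chain p :=
  ∑ i, Finsupp.single (e0 i) (v i)

/-!
Column reduction only ever adds a column to a later one, so for every initial segment of the
`(p+1)`-simplices, in particular for those entering by time `i`, the reduced columns span the same
space as the boundaries of these simplices, which is `B_p(K_i)`. The nonzero reduced columns have
distinct pivots, so in a combination of them the largest pivot cannot cancel. This gives linear
independence, and it shows that a cycle of `K_i`, which is a boundary in `K` because
`H_p(K) = 0`, is a combination of columns whose pivot simplex lies in `K_i`. Conversely such a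
column is supported on rows up to its pivot, hence in `K_i`, and it is a cycle since `∂∂ = 0`.
-/

section Pivot

variable {r : ℕ} {v : Fin r → ZMod 2} {x : Fin r}

theorem pivot_eq_bot_iff : pivot v = ⊥ ↔ v = 0 := by
  simp [pivot, Finset.max_eq_bot, Finset.filter_eq_empty_iff, funext_iff]

theorem pivot_ne_bot (hv : v ≠ 0) : pivot v ≠ ⊥ :=
  pivot_eq_bot_iff.not.mpr hv

theorem le_pivot (h : v x ≠ 0) : (x : WithBot (Fin r)) ≤ pivot v :=
  Finset.le_max (by simpa using h)

theorem apply_pivot_ne_zero (h : pivot v = x) : v x ≠ 0 := by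
  simpa using Finset.mem_of_max h

theorem apply_eq_zero_of_pivot_lt (h : pivot v < x) : v x = 0 := by
  by_contra hx
  exact (le_pivot hx).not_gt h

def pivotRow (hv : v ≠ 0) : Fin r :=
  (pivot v).unbot (pivot_ne_bot hv)

theorem coe_pivotRow (hv : v ≠ 0) : (pivotRow hv : WithBot (Fin r)) = pivot v :=
  WithBot.coe_unbot _ _

theorem apply_pivotRow_ne_zero (hv : v ≠ 0) : v (pivotRow hv) ≠ 0 :=
  apply_pivot_ne_zero (coe_pivotRow hv).symm

theorem le_pivotRow (hv : v ≠ 0) (h : v x ≠ 0) : x ≤ pivotRow hv :=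
  WithBot.coe_le_coe.mp ((le_pivot h).trans (coe_pivotRow hv).ge)

theorem pivot_le_pivot_linearCombination {ι : Type*} {w : ι → Fin r → ZMod 2} {l : ι →₀ ZMod 2}
    (hw : Set.InjOn (fun k => pivot (w k)) l.support) {k : ι} (hk : k ∈ l.support) :
    pivot (w k) ≤ pivot (Finsupp.linearCombination (ZMod 2) w l) := by
  obtain ⟨k₀, hk₀, hmax⟩ := l.support.exists_max_image (fun k => pivot (w k)) ⟨k, hk⟩
  refine (hmax k hk).trans ?_
  cases hp : pivot (w k₀) with
  | bot => exact bot_le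
  | coe x =>
    -- every other column vanishes at the row `x`, so the combination does not
    refine le_pivot ?_
    have hrest : ∀ k' ∈ l.support, k' ≠ k₀ → l k' * w k' x = 0 := fun k' hk' hne => by
      have hlt : pivot (w k') < x := hp ▸ (hmax k' hk').lt_of_ne fun h => hne (hw hk' hk₀ h)
      rw [apply_eq_zero_of_pivot_lt hlt, mul_zero]
    rw [Finsupp.linearCombination_apply, Finsupp.sum, Finset.sum_apply,
      Finset.sum_eq_single_of_mem k₀ hk₀ (by simpa using hrest)]
    exact mul_ne_zero (Finsupp.mem_support_iff.mp hk₀) (apply_pivot_ne_zero hp)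

end Pivot

theorem Submodule.span_range_subtype_ne_zero {R M ι : Type*} [Semiring R] [AddCommMonoid M]
    [Module R M] (f : ι → M) :
    Submodule.span R (Set.range fun i : {i // f i ≠ 0} => f i) =
      Submodule.span R (Set.range f) := by
  rw [← Submodule.span_sdiff_singleton_zero (s := Set.range f)]
  congr 1
  ext x
  simp only [Set.mem_range, Subtype.exists, exists_prop, Set.mem_sdiff, Set.mem_singleton_iff]
  grind

namespace Reduced

variable {m r : ℕ} {R : Fin m → Fin r → ZMod 2}

theorem injective_pivot (hR : Reduced R) :
    Function.Injective fun j : {j // R j ≠ 0} => pivot (R j) :=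
  fun j j' h => Subtype.ext (by_contra fun hne => hR j j' hne j.2 j'.2 h)

theorem linearIndependent (hR : Reduced R) :
    LinearIndependent (ZMod 2) fun j : {j // R j ≠ 0} => R j := by
  refine linearIndependent_iff.mpr fun l hl => by_contra fun hl₀ => ?_
  obtain ⟨k, hk⟩ := Finsupp.support_nonempty_iff.mpr hl₀
  have hk_bot := pivot_le_pivot_linearCombination hR.injective_pivot.injOn hk
  rw [hl, pivot_eq_bot_iff.mpr rfl, le_bot_iff, pivot_eq_bot_iff] at hk_bot
  exact k.2 hk_bot

theorem mem_span_pivot_le (hR : Reduced R) {v : Fin r → ZMod 2}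
    (hv : v ∈ Submodule.span (ZMod 2) (Set.range R)) :
    v ∈ Submodule.span (ZMod 2)
      ((fun j : {j // R j ≠ 0} => R j) '' {j | pivot (R j) ≤ pivot v}) := by
  rw [← Submodule.span_range_subtype_ne_zero, ← Finsupp.range_linearCombination] at hv
  obtain ⟨l, rfl⟩ := hv
  exact (Finsupp.mem_span_image_iff_linearCombination _).mpr
    ⟨l, fun k hk => pivot_le_pivot_linearCombination hR.injective_pivot.injOn hk, rfl⟩

theorem mem_span_image_pivotRow_le (hR : Reduced R) {α : Type*} [Preorder α]
    {f : Fin r → α} (hf : Monotone f) {a : α} {v : Fin r → ZMod 2}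
    (hv : v ∈ Submodule.span (ZMod 2) (Set.range R)) (hva : ∀ x, v x ≠ 0 → f x ≤ a) :
    v ∈ Submodule.span (ZMod 2)
      ((fun j : {j // R j ≠ 0} => R j) '' {j | f (pivotRow j.2) ≤ a}) := by
  by_cases hv₀ : v = 0
  · rw [hv₀]
    exact Submodule.zero_mem _
  refine Submodule.span_mono (Set.image_mono fun j hj => ?_) (hR.mem_span_pivot_le hv)
  have hle : pivotRow j.2 ≤ pivotRow hv₀ := by
    rw [← WithBot.coe_le_coe, coe_pivotRow, coe_pivotRow]
    exact hj
  exact (hf hle).trans (hva _ (apply_pivotRow_ne_zero hv₀))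

end Reduced

section ColumnReduction

variable {m r : ℕ}

theorem applyMove_applyMove_self (C : Fin m → Fin r → ZMod 2) {i j : Fin m} (hij : i ≠ j) :
    applyMove (applyMove C (i, j)) (i, j) = C := by
  ext k x
  by_cases hk : k = j
  · subst hk
    simp [applyMove, Function.update_of_ne hij, add_assoc, CharTwo.add_self_eq_zero]
  · simp [applyMove, Function.update_of_ne hk]

theorem span_image_applyMove_le (C : Fin m → Fin r → ZMod 2) {i j : Fin m} {s : Set (Fin m)}
    (hs : j ∈ s → i ∈ s) :
    Submodule.span (ZMod 2) (applyMove C (i, j) '' s) ≤ Submodule.span (ZMod 2) (C '' s) := by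
  refine Submodule.span_le.mpr ?_
  rintro _ ⟨k, hk, rfl⟩
  by_cases hkj : k = j
  · subst hkj
    simp only [applyMove, Function.update_self]
    exact add_mem (Submodule.subset_span ⟨k, hk, rfl⟩) (Submodule.subset_span ⟨i, hs hk, rfl⟩)
  · simp only [applyMove, Function.update_of_ne hkj]
    exact Submodule.subset_span ⟨k, hk, rfl⟩

theorem span_image_applyMove (C : Fin m → Fin r → ZMod 2) {i j : Fin m} (hij : i < j)
    {s : Set (Fin m)} (hs : IsLowerSet s) :
    Submodule.span (ZMod 2) (applyMove C (i, j) '' s) = Submodule.span (ZMod 2) (C '' s) := by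
  have hs' : j ∈ s → i ∈ s := hs hij.le
  refine (span_image_applyMove_le C hs').antisymm ?_
  simpa only [applyMove_applyMove_self C hij.ne] using
    span_image_applyMove_le (applyMove C (i, j)) hs'

variable {C R : Fin m → Fin r → ZMod 2} {L : List (Fin m × Fin m)}

theorem ValidTrace.span_image_eq (h : ValidTrace C L R) {s : Set (Fin m)} (hs : IsLowerSet s) :
    Submodule.span (ZMod 2) (C '' s) = Submodule.span (ZMod 2) (R '' s) := by
  induction h with
  | nil => rfl
  | cons hlt _ _ _ _ ih => rw [← ih, span_image_applyMove _ hlt hs]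

theorem ValidTrace.span_image_ne_zero_eq (h : ValidTrace C L R) {M : Type*} [AddCommGroup M]
    [Module (ZMod 2) M] (T : (Fin r → ZMod 2) →ₗ[ZMod 2] M) {s : Set (Fin m)}
    (hs : IsLowerSet s) :
    Submodule.span (ZMod 2) ((fun j : {j // R j ≠ 0} => T (R j)) '' {j | j.1 ∈ s}) =
      Submodule.span (ZMod 2) ((fun j => T (C j)) '' s) := by
  have hzero : Submodule.span (ZMod 2) ((fun j : {j // R j ≠ 0} => T (R j)) '' {j | j.1 ∈ s}) =
      Submodule.span (ZMod 2) ((fun j => T (R j)) '' s) := by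
    refine le_antisymm (Submodule.span_mono ?_) (Submodule.span_le.mpr ?_)
    · rintro _ ⟨j, hj, rfl⟩
      exact ⟨j.1, hj, rfl⟩
    · rintro _ ⟨j, hj, rfl⟩
      by_cases hRj : R j = 0
      · simp [hRj]
      · exact Submodule.subset_span ⟨⟨j, hRj⟩, hj, rfl⟩
  rw [hzero, ← Set.image_image T R, ← Set.image_image T C, Submodule.span_image,
    Submodule.span_image, h.span_image_eq hs]

end ColumnReduction

theorem sum_attach_erase_eq_ite {α : Type*} [DecidableEq α] {σ τ : Finset α}
    (hcard : σ.card + 1 = τ.card) :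
    ∑ v ∈ τ.attach, (if τ.erase v.1 = σ then 1 else 0 : ZMod 2) = if σ ⊆ τ then 1 else 0 := by
  split_ifs with hστ
  · obtain ⟨a, haσ, rfl⟩ := Finset.exists_eq_insert_iff.mpr ⟨hστ, hcard⟩
    rw [Finset.sum_eq_single_of_mem ⟨a, Finset.mem_insert_self a σ⟩ (Finset.mem_attach _ _)]
    · simp [Finset.erase_insert haσ]
    · rintro ⟨v, hv⟩ - hva
      have hav : a ≠ v := fun h => hva (Subtype.ext h.symm)
      refine if_neg fun h => haσ ?_
      rw [← h]
      exact Finset.mem_erase.mpr ⟨hav, Finset.mem_insert_self a σ⟩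
  · refine Finset.sum_eq_zero fun v _ => if_neg fun h => hστ ?_
    exact h ▸ Finset.erase_subset _ _

namespace SimpComplex

variable (K : SimpComplex V) {p : ℕ}

def facet (τ : K.simplices (p + 1)) (v : τ.1) : K.simplices p :=
  ⟨τ.1.erase v.1, K.down_closed _ τ.2.1 _ (Finset.erase_subset _ _),
    by rw [Finset.card_erase_of_mem v.2, τ.2.2]; rfl⟩

theorem sum_single_facet_facet_eq_zero (τ : K.simplices (p + 2)) :
    ∑ v ∈ τ.1.attach, ∑ w ∈ (K.facet τ v).1.attach,
      Finsupp.single (K.facet (K.facet τ v) w) (1 : ZMod 2) = 0 := by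
  rw [Finset.sum_sigma']
  -- removing `v` then `w` from `τ` gives the same face as removing `w` then `v`
  refine Finset.sum_involution
    (fun x _ => ⟨⟨x.2.1, Finset.mem_of_mem_erase x.2.2⟩,
      ⟨x.1.1, Finset.mem_erase.mpr ⟨(Finset.ne_of_mem_erase x.2.2).symm, x.1.2⟩⟩⟩)
    (fun x _ => ?_) (fun x _ _ h => Finset.ne_of_mem_erase x.2.2 (congrArg (·.1.1) h))
    (fun _ _ => Finset.mem_sigma.mpr ⟨Finset.mem_attach _ _, Finset.mem_attach _ _⟩)
    (fun _ _ => rfl)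
  have hcancel : ∀ σ σ' : K.simplices p, σ.1 = σ'.1 →
      Finsupp.single σ (1 : ZMod 2) + Finsupp.single σ' 1 = 0 := by
    rintro σ σ' h
    rw [Subtype.ext h, ← Finsupp.single_add, CharTwo.add_self_eq_zero, Finsupp.single_zero]
  exact hcancel _ _ Finset.erase_right_comm

theorem boundary_facetSum (τ : K.simplices (p + 1)) : K.boundary p (K.facetSum p τ) = 0 := by
  cases p with
  | zero => rfl
  | succ q =>
    show Finsupp.linearCombination (ZMod 2) (K.facetSum q)
      (∑ v ∈ τ.1.attach, Finsupp.single (K.facet τ v) 1) = 0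
    rw [map_sum]
    simp only [Finsupp.linearCombination_single, one_smul]
    exact K.sum_single_facet_facet_eq_zero τ

theorem range_boundary (p : ℕ) :
    LinearMap.range (K.boundary (p + 1)) = Submodule.span (ZMod 2) (Set.range (K.facetSum p)) :=
  Finsupp.range_linearCombination _

theorem range_boundary_le_ker (p : ℕ) :
    LinearMap.range (K.boundary (p + 1)) ≤ LinearMap.ker (K.boundary p) := by
  rw [range_boundary, Submodule.span_le]
  rintro _ ⟨τ, rfl⟩
  exact K.boundary_facetSum τ

theorem range_boundary_eq_span_facetSum {n₁ : ℕ} (e₁ : Fin n₁ ≃ K.simplices (p + 1)) :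
    LinearMap.range (K.boundary (p + 1)) =
      Submodule.span (ZMod 2) (Set.range fun j => K.facetSum p (e₁ j)) := by
  rw [range_boundary]
  exact congrArg _ (e₁.surjective.range_comp _).symm

theorem boundariesOf_eq_span_facetSum {n₁ : ℕ} (e₁ : Fin n₁ ≃ K.simplices (p + 1))
    (S : Set (Finset V)) :
    K.boundariesOf S p =
      Submodule.span (ZMod 2) ((fun j => K.facetSum p (e₁ j)) '' {j | (e₁ j).1 ∈ S}) := by
  rw [← Set.image_image, show {j | (e₁ j).1 ∈ S} = e₁ ⁻¹' {τ | τ.1 ∈ S} from rfl,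
    e₁.image_preimage]
  exact (Finsupp.span_image_eq_map_linearCombination _ _).symm

variable {n₀ : ℕ} (e₀ : Fin n₀ ≃ K.simplices p)

noncomputable def chainEquiv : (Fin n₀ → ZMod 2) ≃ₗ[ZMod 2] K.Chain p :=
  (Finsupp.linearEquivFunOnFinite (ZMod 2) (ZMod 2) (Fin n₀)).symm.trans (Finsupp.domLCongr e₀)

theorem chainEquiv_apply (v : Fin n₀ → ZMod 2) :
    K.chainEquiv e₀ v = Finsupp.equivMapDomain e₀ (Finsupp.equivFunOnFinite.symm v) :=
  rfl

theorem toChain_eq_chainEquiv (v : Fin n₀ → ZMod 2) :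
    toChain K p n₀ e₀ v = K.chainEquiv e₀ v := by
  rw [chainEquiv_apply]
  refine Finsupp.ext fun σ => ?_
  show (∑ x, Finsupp.single (e₀ x) (v x) : K.simplices p →₀ ZMod 2) σ = _
  rw [Finsupp.finsetSum_apply, Fintype.sum_eq_single (e₀.symm σ)]
  · simp
  · intro x hx
    exact Finsupp.single_eq_of_ne (by rw [Ne, ← Equiv.symm_apply_eq]; exact Ne.symm hx)

theorem chainEquiv_mem_supported_iff (v : Fin n₀ → ZMod 2) (s : Set (K.simplices p)) :
    K.chainEquiv e₀ v ∈ Finsupp.supported (ZMod 2) (ZMod 2) s ↔ ∀ x, v x ≠ 0 → e₀ x ∈ s := by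
  refine (Finsupp.mem_supported (ZMod 2) (K.chainEquiv e₀ v)).trans ?_
  simp only [chainEquiv_apply, Set.subset_def, Finset.mem_coe, Finsupp.mem_support_iff,
    Finsupp.equivMapDomain_apply, Finsupp.coe_equivFunOnFinite_symm, ← e₀.forall_congr_right,
    Equiv.symm_apply_apply]

theorem chainEquiv_ite_subset_eq_facetSum (τ : K.simplices (p + 1)) :
    K.chainEquiv e₀ (fun x => if (e₀ x).1 ⊆ τ.1 then 1 else 0) = K.facetSum p τ := by
  classical
  rw [chainEquiv_apply]
  refine Finsupp.ext fun σ => ?_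
  simp only [Finsupp.equivMapDomain_apply, Finsupp.coe_equivFunOnFinite_symm,
    Equiv.apply_symm_apply]
  rw [← sum_attach_erase_eq_ite (by rw [σ.2.2, τ.2.2])]
  show _ = (∑ v ∈ τ.1.attach, Finsupp.single _ 1 : K.simplices p →₀ ZMod 2) σ
  rw [Finsupp.finsetSum_apply]
  refine Finset.sum_congr rfl fun v _ => ?_
  erw [Finsupp.single_apply]
  exact if_congr ⟨fun h => Subtype.ext h, congrArg Subtype.val⟩ rfl rfl

variable {e₀} {n₁ : ℕ} {R : Fin n₁ → Fin n₀ → ZMod 2}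

theorem span_image_chainEquiv_eq_cyclesOf (hR : Reduced R)
    (hH : LinearMap.ker (K.boundary p) ≤ LinearMap.range (K.boundary (p + 1)))
    (hRB : LinearMap.range (K.boundary (p + 1)) =
      Submodule.span (ZMod 2) (K.chainEquiv e₀ '' Set.range R))
    {α : Type*} [Preorder α] {g : Fin n₀ → α} (hg : Monotone g) {a : α} {S : Set (Finset V)}
    (hS : ∀ x, (e₀ x).1 ∈ S ↔ g x ≤ a) :
    Submodule.span (ZMod 2)
        ((fun j : {j // R j ≠ 0} => K.chainEquiv e₀ (R j)) '' {j | g (pivotRow j.2) ≤ a}) =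
      K.cyclesOf S p := by
  refine le_antisymm (Submodule.span_le.mpr ?_) fun z hz => ?_
  · rintro _ ⟨j, hj, rfl⟩
    refine ⟨(K.chainEquiv_mem_supported_iff e₀ _ _).mpr fun x hx => (hS x).mpr ?_,
      K.range_boundary_le_ker p ?_⟩
    · exact (hg (le_pivotRow j.2 hx)).trans hj
    · exact hRB.ge (Submodule.subset_span ⟨R j, ⟨j, rfl⟩, rfl⟩)
  · obtain ⟨hz_supp, hz_cycle⟩ := hz
    obtain ⟨v, rfl⟩ := (K.chainEquiv e₀).surjective z
    have hv : v ∈ Submodule.span (ZMod 2) (Set.range R) :=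
      (Submodule.apply_mem_span_image_iff_mem_span (f := (K.chainEquiv e₀).toLinearMap)
        (K.chainEquiv e₀).injective).mp (hRB.le (hH hz_cycle))
    rw [← Set.image_image (K.chainEquiv e₀)]
    exact Submodule.apply_mem_span_image_of_mem_span (K.chainEquiv e₀).toLinearMap
      (hR.mem_span_image_pivotRow_le hg hv fun x hx =>
        (hS x).mp ((K.chainEquiv_mem_supported_iff e₀ v _).mp hz_supp x hx))

end SimpComplex

theorem reduced_boundary_matrix_barcode_basis_general
    (K : SimpComplex V) (p : ℕ) (nF : ℕ)
    (F : Fin (nF + 1) → SimpComplex V)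
    (n0 n1 : ℕ) (e0 : Fin n0 ≃ K.simplices p) (e1 : Fin n1 ≃ K.simplices (p + 1))
    (entP : K.simplices p → Fin (nF + 1))
    (entP1 : K.simplices (p + 1) → Fin (nF + 1))
    (hentP : ∀ (σ : K.simplices p) (i : Fin (nF + 1)),
      σ.1 ∈ (F i).faces ↔ entP σ ≤ i)
    (hentP1 : ∀ (τ : K.simplices (p + 1)) (i : Fin (nF + 1)),
      τ.1 ∈ (F i).faces ↔ entP1 τ ≤ i)
    (hordP : ∀ x y : Fin n0, x ≤ y → entP (e0 x) ≤ entP (e0 y))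
    (hordP1 : ∀ x y : Fin n1, x ≤ y → entP1 (e1 x) ≤ entP1 (e1 y))
    (B : Fin n1 → Fin n0 → ZMod 2)
    (hB : ∀ j i, B j i = if (e0 i).1 ⊆ (e1 j).1 then 1 else 0)
    (Lmoves : List (Fin n1 × Fin n1)) (R : Fin n1 → Fin n0 → ZMod 2)
    (htrace : ValidTrace B Lmoves R) (hred : Reduced R)
    (hH : LinearMap.ker (K.boundary p) ≤ LinearMap.range (K.boundary (p + 1))) :
    ∃ piv : ∀ j : Fin n1, R j ≠ 0 → Fin n0,
      (∀ (j : Fin n1) (hj : R j ≠ 0), pivot (R j) = (piv j hj : WithBot (Fin n0))) ∧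
      LinearIndependent (ZMod 2)
        (fun j : {j : Fin n1 // R j ≠ 0} => toChain K p n0 e0 (R j.1)) ∧
      ∀ i : Fin (nF + 1),
        Submodule.span (ZMod 2)
            ((fun j : {j : Fin n1 // R j ≠ 0} => toChain K p n0 e0 (R j.1)) ''
              {j | entP (e0 (piv j.1 j.2)) ≤ i}) =
          K.cyclesOf (F i).faces p ∧
        Submodule.span (ZMod 2)
            ((fun j : {j : Fin n1 // R j ≠ 0} => toChain K p n0 e0 (R j.1)) ''
              {j | entP1 (e1 j.1) ≤ i}) =
          K.boundariesOf (F i).faces p := by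
  simp only [K.toChain_eq_chainEquiv e0]
  set T := K.chainEquiv e0
  have hcol : ∀ j, T (B j) = K.facetSum p (e1 j) := fun j => by
    rw [← K.chainEquiv_ite_subset_eq_facetSum e0, funext (hB j)]
  have hrange : LinearMap.range (K.boundary (p + 1)) =
      Submodule.span (ZMod 2) (T '' Set.range R) := by
    rw [K.range_boundary_eq_span_facetSum e1, ← Set.image_univ, ← Set.image_univ]
    simp only [← hcol]
    rw [← Set.image_image, Submodule.span_image_linearEquiv, Submodule.span_image_linearEquiv,
      htrace.span_image_eq isLowerSet_univ]
  have hdead : ∀ i, IsLowerSet {j | entP1 (e1 j) ≤ i} := fun i _ _ hle h =>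
    (hordP1 _ _ hle).trans h
  refine ⟨fun j hj => pivotRow hj, fun j hj => (coe_pivotRow hj).symm,
    hred.linearIndependent.map' T.toLinearMap T.ker, fun i => ⟨?_, ?_⟩⟩
  · exact K.span_image_chainEquiv_eq_cyclesOf hred hH hrange (fun x y => hordP x y)
      fun x => hentP (e0 x) i
  · simp only [K.boundariesOf_eq_span_facetSum e1, hentP1, ← hcol]
    simpa only [LinearEquiv.coe_coe, Set.mem_ofPred_eq] using
      htrace.span_image_ne_zero_eq T.toLinearMap (hdead i)

/-- The nonzero columns of the reduced boundary matrix of a filtered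
simplicial complex, with bars read off from the pivots, form a barcode basis
of `Z_p(K)`: for every filtration index `i`, the columns born by `i` (pivot
`p`-simplex entering by time `i`) form a basis of `Z_p(K_i)`, and the columns
dead by `i` (their `(p+1)`-simplex entering by time `i`) form a basis of
`B_p(K_i)`.  Here `H_p(K) = 0` is assumed. -/
theorem reduced_boundary_matrix_barcode_basis
    (K : SimpComplex V) (p : ℕ) (nF : ℕ)
    (F : Fin (nF + 1) → SimpComplex V)
    (hmono : ∀ i j : Fin (nF + 1), i ≤ j → (F i).faces ⊆ (F j).faces)
    (hlast : F (Fin.last nF) = K)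
    (n0 n1 : ℕ) (e0 : Fin n0 ≃ K.simplices p) (e1 : Fin n1 ≃ K.simplices (p + 1))
    (entP : K.simplices p → Fin (nF + 1))
    (entP1 : K.simplices (p + 1) → Fin (nF + 1))
    (hentP : ∀ (σ : K.simplices p) (i : Fin (nF + 1)),
      σ.1 ∈ (F i).faces ↔ entP σ ≤ i)
    (hentP1 : ∀ (τ : K.simplices (p + 1)) (i : Fin (nF + 1)),
      τ.1 ∈ (F i).faces ↔ entP1 τ ≤ i)
    (hordP : ∀ x y : Fin n0, x ≤ y → entP (e0 x) ≤ entP (e0 y))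
    (hordP1 : ∀ x y : Fin n1, x ≤ y → entP1 (e1 x) ≤ entP1 (e1 y))
    (B : Fin n1 → Fin n0 → ZMod 2)
    (hB : ∀ j i, B j i = if (e0 i).1 ⊆ (e1 j).1 then 1 else 0)
    (Lmoves : List (Fin n1 × Fin n1)) (R : Fin n1 → Fin n0 → ZMod 2)
    (htrace : ValidTrace B Lmoves R) (hred : Reduced R)
    (hH : LinearMap.ker (K.boundary p) ≤ LinearMap.range (K.boundary (p + 1))) :
    ∃ piv : ∀ j : Fin n1, R j ≠ 0 → Fin n0,
      (∀ (j : Fin n1) (hj : R j ≠ 0), pivot (R j) = (piv j hj : WithBot (Fin n0))) ∧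
      LinearIndependent (ZMod 2)
        (fun j : {j : Fin n1 // R j ≠ 0} => toChain K p n0 e0 (R j.1)) ∧
      ∀ i : Fin (nF + 1),
        Submodule.span (ZMod 2)
            ((fun j : {j : Fin n1 // R j ≠ 0} => toChain K p n0 e0 (R j.1)) ''
              {j | entP (e0 (piv j.1 j.2)) ≤ i}) =
          K.cyclesOf (F i).faces p ∧
        Submodule.span (ZMod 2)
            ((fun j : {j : Fin n1 // R j ≠ 0} => toChain K p n0 e0 (R j.1)) ''
              {j | entP1 (e1 j.1) ≤ i}) =
          K.boundariesOf (F i).faces p :=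
  reduced_boundary_matrix_barcode_basis_general K p nF F n0 n1 e0 e1 entP entP1 hentP hentP1 hordP
    hordP1 B hB Lmoves R htrace hred hH
end

section
/- Over the field ℤ/2, a persistence module map φ : M → N between modules in barcode form M = ⨁_j I_{[a_j,b_j)}, N = ⨁_l I_{[c_l,d_l)} can be reconstructed from its graphcode together with the interval data: define φ_i on the i-th vector space by sending the basis vector of the j-th summand (when a_j ≤ i < b_j) to the sum of basis vectors of summands l with (j,l) an edge of the graphcode and c_l ≤ i < d_l; this collection of maps is a well-defined morphism of persistence modules equal to φ. -/
variable {k : Type} [Field k] {n : ℕ}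

/-- The canonical basis vector of the `j`-th summand of a direct sum of
interval modules, at index `i` (zero if the `j`-th interval is not active
at `i`). -/
def unitVecAt {g : ℕ} (a b : Fin g → ℕ) (i : Fin n) (j : Fin g) :
    (dSum fun j' => intervalMod k n (a j') (b j')).V i :=
  fun j' =>
    ⟨(if j' = j then (1 : k) else 0) *
        (if a j' ≤ (i : ℕ) + 1 ∧ (i : ℕ) + 1 < b j' then (1 : k) else 0), by
      by_cases hc : a j' ≤ (i : ℕ) + 1 ∧ (i : ℕ) + 1 < b j' <;>
        simp [intervalMod, intervalSpace, hc]⟩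

/-- The matrix of scalars `(λ_{lj})` of a morphism `φ` between persistence
modules in barcode form, read off by evaluating `φ` at the birth index `a_j`
of the `j`-th source interval on its basis vector and taking the `l`-th
coordinate. -/
def matrixOf {g h : ℕ} (a b : Fin g → ℕ) (c d : Fin h → ℕ)
    (hab : ∀ j, 1 ≤ a j ∧ a j < b j ∧ b j ≤ n + 1)
    (φ : PersHom (dSum fun j => intervalMod k n (a j) (b j))
      (dSum fun l => intervalMod k n (c l) (d l)))
    (l : Fin h) (j : Fin g) : k :=
  (show ↥(intervalSpace k n (c l) (d l) ⟨a j - 1, by have := hab j; omega⟩) from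
    (φ.app ⟨a j - 1, by have := hab j; omega⟩
      (unitVecAt a b ⟨a j - 1, by have := hab j; omega⟩ j)) l).1

/-- The map reconstructed from the graphcode of `φ` at index `i`: the basis
vector of the `j`-th summand (when `a_j ≤ i < b_j`) is sent to the sum of the
basis vectors of the summands `l` with `(j, l)` an edge of the graphcode and
`c_l ≤ i < d_l`. -/
def recApp {n g h : ℕ} (a b : Fin g → ℕ) (c d : Fin h → ℕ)
    (hab : ∀ j, 1 ≤ a j ∧ a j < b j ∧ b j ≤ n + 1)
    (φ : PersHom (dSum fun j => intervalMod (ZMod 2) n (a j) (b j))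
      (dSum fun l => intervalMod (ZMod 2) n (c l) (d l))) (i : Fin n) :
    (dSum fun j => intervalMod (ZMod 2) n (a j) (b j)).V i →ₗ[ZMod 2]
      (dSum fun l => intervalMod (ZMod 2) n (c l) (d l)).V i where
  toFun x l :=
    ⟨∑ j : Fin g,
        if matrixOf a b c d hab φ l j = 1 ∧
            (a j ≤ (i : ℕ) + 1 ∧ (i : ℕ) + 1 < b j) ∧
            (c l ≤ (i : ℕ) + 1 ∧ (i : ℕ) + 1 < d l) then
          (show ↥(intervalSpace (ZMod 2) n (a j) (b j) i) from x j).1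
        else 0, by
      by_cases hc : c l ≤ (i : ℕ) + 1 ∧ (i : ℕ) + 1 < d l
      · simp [intervalMod, intervalSpace, hc]
      · simp only [intervalMod, intervalSpace, if_neg hc, Submodule.mem_bot]
        refine Finset.sum_eq_zero fun j _ => ?_
        rw [if_neg]
        tauto⟩
  map_add' := by
    intro x y
    funext l
    apply Subtype.ext
    show (∑ j : Fin g, _) = (∑ j : Fin g, _) + (∑ j : Fin g, _)
    rw [← Finset.sum_add_distrib]
    exact Finset.sum_congr rfl fun j _ => by split_ifs <;> rfl
  map_smul' := by
    intro r x
    funext l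
    apply Subtype.ext
    show (∑ j : Fin g, _) = r • (∑ j : Fin g, _)
    rw [Finset.smul_sum]
    refine Finset.sum_congr rfl fun j _ => ?_
    split_ifs
    · rfl
    · simp

/-!
By naturality, the image under `φ_i` of the basis vector of the `j`-th source interval is the
push-forward of its image at the birth index `a_j`; hence its `l`-th coordinate is the single
scalar `λ_{lj}` read off there, whenever both intervals are alive at `i`, and `0` otherwise.
Expanding a vector in the basis shows that `φ_i` is the matrix `(λ_{lj})` restricted to the
pairs alive at `i`. Over `ℤ/2` multiplying by `λ_{lj}` keeps a term exactly when `λ_{lj} = 1`,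
i.e. when `(j, l)` is an edge of the graphcode, so the reconstructed maps are the `φ_i`
themselves and in particular form a morphism.
-/

section Barcode

variable {g h : ℕ}

def barcodeCoord (a b : Fin g → ℕ) (i : Fin n) (j : Fin g) :
    (dSum fun j => intervalMod k n (a j) (b j)).V i →ₗ[k] k :=
  (intervalSpace k n (a j) (b j) i).subtype.comp (LinearMap.proj j)

variable (a b : Fin g → ℕ)

lemma barcodeCoord_eq_zero {i : Fin n} {j : Fin g}
    (hj : ¬(a j ≤ (i : ℕ) + 1 ∧ (i : ℕ) + 1 < b j))
    (x : (dSum fun j => intervalMod k n (a j) (b j)).V i) :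
    barcodeCoord a b i j x = 0 := by
  have hx := (show ↥(intervalSpace k n (a j) (b j) i) from x j).2
  simp only [intervalSpace, if_neg hj, Submodule.mem_bot] at hx
  exact hx

lemma barcodeCoord_ext {i : Fin n} {x y : (dSum fun j => intervalMod k n (a j) (b j)).V i}
    (hxy : ∀ j, barcodeCoord a b i j x = barcodeCoord a b i j y) : x = y :=
  funext fun j => Subtype.ext (hxy j)

lemma barcodeCoord_map {i i' : Fin n} (hii' : i ≤ i') (j : Fin g)
    (x : (dSum fun j => intervalMod k n (a j) (b j)).V i) :
    barcodeCoord a b i' j ((dSum fun j => intervalMod k n (a j) (b j)).map hii' x) =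
      if a j ≤ (i' : ℕ) + 1 ∧ (i' : ℕ) + 1 < b j then barcodeCoord a b i j x else 0 :=
  rfl

lemma barcodeCoord_unitVecAt (i : Fin n) (j j' : Fin g) :
    barcodeCoord a b i j' (unitVecAt (k := k) a b i j) =
      if j' = j ∧ (a j ≤ (i : ℕ) + 1 ∧ (i : ℕ) + 1 < b j) then 1 else 0 := by
  show (if j' = j then (1 : k) else 0) * _ = _
  by_cases hjj : j' = j
  · subst hjj; split_ifs <;> simp_all
  · simp [hjj]

lemma unitVecAt_eq_zero {i : Fin n} {j : Fin g}
    (hj : ¬(a j ≤ (i : ℕ) + 1 ∧ (i : ℕ) + 1 < b j)) :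
    unitVecAt (k := k) a b i j = 0 :=
  barcodeCoord_ext a b fun j' => by simp [barcodeCoord_unitVecAt, hj]

lemma eq_sum_barcodeCoord_smul_unitVecAt (i : Fin n)
    (x : (dSum fun j => intervalMod k n (a j) (b j)).V i) :
    x = ∑ j, barcodeCoord a b i j x • unitVecAt a b i j := by
  refine barcodeCoord_ext a b fun j' => ?_
  simp only [map_sum, map_smul, barcodeCoord_unitVecAt, smul_eq_mul, mul_ite, mul_one,
    mul_zero]
  rw [Finset.sum_eq_single_of_mem j' (Finset.mem_univ _) fun j _ hj => if_neg fun h => hj h.1.symm]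
  by_cases hj' : a j' ≤ (i : ℕ) + 1 ∧ (i : ℕ) + 1 < b j'
  · simp [hj']
  · simp [hj', barcodeCoord_eq_zero a b hj']

lemma map_unitVecAt {i i' : Fin n} (hii' : i ≤ i') {j : Fin g}
    (hi : a j ≤ (i : ℕ) + 1) :
    (dSum fun j => intervalMod k n (a j) (b j)).map hii' (unitVecAt a b i j) =
      unitVecAt a b i' j := by
  refine barcodeCoord_ext a b fun j' => ?_
  rw [barcodeCoord_map, barcodeCoord_unitVecAt, barcodeCoord_unitVecAt]
  have : (i : ℕ) ≤ i' := hii'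
  split_ifs <;> grind

variable {a b} {c d : Fin h → ℕ}

lemma PersHom.barcodeCoord_app_unitVecAt (hab : ∀ j, 1 ≤ a j ∧ a j < b j ∧ b j ≤ n + 1)
    (φ : PersHom (dSum fun j => intervalMod k n (a j) (b j))
      (dSum fun l => intervalMod k n (c l) (d l)))
    (i : Fin n) (j : Fin g) (l : Fin h) :
    barcodeCoord c d i l (φ.app i (unitVecAt a b i j)) =
      if (a j ≤ (i : ℕ) + 1 ∧ (i : ℕ) + 1 < b j) ∧ (c l ≤ (i : ℕ) + 1 ∧ (i : ℕ) + 1 < d l) then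
        matrixOf a b c d hab φ l j else 0 := by
  by_cases hj : a j ≤ (i : ℕ) + 1 ∧ (i : ℕ) + 1 < b j
  · set birth : Fin n := ⟨a j - 1, by have := hab j; omega⟩
    have hbirth : birth ≤ i := by
      rw [Fin.le_def]
      show a j - 1 ≤ (i : ℕ)
      omega
    have hnat := LinearMap.congr_fun (φ.natural hbirth) (unitVecAt a b birth j)
    rw [LinearMap.comp_apply, LinearMap.comp_apply,
      map_unitVecAt a b hbirth (by have := hab j; simp only [birth]; omega)] at hnat
    rw [← hnat, barcodeCoord_map]
    simp only [hj, true_and]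
    rfl
  · rw [unitVecAt_eq_zero a b hj, map_zero, map_zero, if_neg (by tauto)]

lemma PersHom.barcodeCoord_app (hab : ∀ j, 1 ≤ a j ∧ a j < b j ∧ b j ≤ n + 1)
    (φ : PersHom (dSum fun j => intervalMod k n (a j) (b j))
      (dSum fun l => intervalMod k n (c l) (d l)))
    (i : Fin n) (x : (dSum fun j => intervalMod k n (a j) (b j)).V i) (l : Fin h) :
    barcodeCoord c d i l (φ.app i x) =
      ∑ j, barcodeCoord a b i j x *
        if (a j ≤ (i : ℕ) + 1 ∧ (i : ℕ) + 1 < b j) ∧ (c l ≤ (i : ℕ) + 1 ∧ (i : ℕ) + 1 < d l) then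
          matrixOf a b c d hab φ l j else 0 := by
  conv_lhs => rw [eq_sum_barcodeCoord_smul_unitVecAt a b i x]
  simp only [map_sum, map_smul, smul_eq_mul, φ.barcodeCoord_app_unitVecAt hab]

end Barcode

lemma ZMod.mul_eq_ite_eq_one (x m : ZMod 2) : x * m = if m = 1 then x else 0 := by
  revert x m; decide

lemma recApp_eq_app {g h : ℕ} {a b : Fin g → ℕ} {c d : Fin h → ℕ}
    (hab : ∀ j, 1 ≤ a j ∧ a j < b j ∧ b j ≤ n + 1)
    (φ : PersHom (dSum fun j => intervalMod (ZMod 2) n (a j) (b j))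
      (dSum fun l => intervalMod (ZMod 2) n (c l) (d l))) (i : Fin n) :
    recApp a b c d hab φ i = φ.app i := by
  refine LinearMap.ext fun x => barcodeCoord_ext c d fun l => ?_
  rw [φ.barcodeCoord_app hab]
  show ∑ j : Fin g, _ = ∑ j : Fin g, _
  refine Finset.sum_congr rfl fun j _ => ?_
  rw [ZMod.mul_eq_ite_eq_one]
  split_ifs <;> first | rfl | tauto

theorem graphcode_reconstruction_general (n g h : ℕ)
    (a b : Fin g → ℕ) (c d : Fin h → ℕ)
    (hab : ∀ j, 1 ≤ a j ∧ a j < b j ∧ b j ≤ n + 1)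
    (φ : PersHom (dSum fun j => intervalMod (ZMod 2) n (a j) (b j))
      (dSum fun l => intervalMod (ZMod 2) n (c l) (d l))) :
    ∃ ψ : PersHom (dSum fun j => intervalMod (ZMod 2) n (a j) (b j))
        (dSum fun l => intervalMod (ZMod 2) n (c l) (d l)),
      (∀ i, ψ.app i = recApp a b c d hab φ i) ∧ ψ = φ :=
  ⟨φ, fun i => (recApp_eq_app hab φ i).symm, rfl⟩

/-- Over `ℤ/2`, a morphism `φ` between persistence modules in barcode form can
be reconstructed from its graphcode together with the interval data: the
collection of maps sending the basis vector of source summand `j` (when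
`a_j ≤ i < b_j`) to the sum of basis vectors of target summands `l` with
`(j, l)` an edge of the graphcode and `c_l ≤ i < d_l` is a well-defined
morphism of persistence modules, and it equals `φ`. -/
theorem graphcode_reconstruction (n g h : ℕ)
    (a b : Fin g → ℕ) (c d : Fin h → ℕ)
    (hab : ∀ j, 1 ≤ a j ∧ a j < b j ∧ b j ≤ n + 1)
    (hcd : ∀ l, 1 ≤ c l ∧ c l < d l ∧ d l ≤ n + 1)
    (φ : PersHom (dSum fun j => intervalMod (ZMod 2) n (a j) (b j))
      (dSum fun l => intervalMod (ZMod 2) n (c l) (d l))) :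
    ∃ ψ : PersHom (dSum fun j => intervalMod (ZMod 2) n (a j) (b j))
        (dSum fun l => intervalMod (ZMod 2) n (c l) (d l)),
      (∀ i, ψ.app i = recApp a b c d hab φ i) ∧ ψ = φ :=
  graphcode_reconstruction_general n g h a b c d hab φ
end

section
/- Let V be a finite-dimensional vector space, and let W_1 ⊆ W_2 ⊆ V be nested subspaces. Any basis A' of W_1 can be extended first to a basis A'' of W_2 and then to a basis of V; consequently, for filtered cycle spaces, a basis of Z_p(L) ∩ B_p(K) starting with a basis of B_p(L) can be extended to a consistent basis A_L of Z_p(L) and further to a consistent basis A_K of Z_p(K) such that every element of A_L is an element of A_K and the homology map i_* : H_p(L) → H_p(K) is diagonal in these bases. -/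
variable {V : Type} [DecidableEq V]

/-!
Extend a basis `s` of `U ⊓ B` separately to a basis `sU` of `U` and a basis `sB` of `B`.
The union `sU ∪ sB` is still independent: a vector in the span of `sU` and in the span of
`sB \ s` lies in `U ⊓ B = span s`, and `span s` meets `span (sB \ s)` only in `0`.
Extending `sU ∪ sB` to a basis of `Z ⊇ U + B` keeps `sB` inside it, so the basis of `Z` is
adapted to `B`. For `U = Z_p(L)`, `B = B_p(K)`, `Z = Z_p(K)` this needs `B_p(K) ≤ Z_p(K)`,
i.e. `∂ ∘ ∂ = 0`, which over `ℤ/2` holds because every codimension-two face of a simplex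
arises twice.
-/

section LinearAlgebra

variable {K X : Type} [DivisionRing K] [AddCommGroup X] [Module K X]

open Submodule

theorem LinearIndepOn.exists_extension_span_eq {s : Set X} {W : Submodule K X}
    (hs : LinearIndepOn K id s) (hsW : s ⊆ W) :
    ∃ t, s ⊆ t ∧ LinearIndepOn K id t ∧ span K t = W := by
  obtain ⟨t, htW, hst, hWt, ht⟩ := exists_linearIndepOn_id_extension hs hsW
  exact ⟨t, hst, ht, le_antisymm (span_le.2 htW) fun x hx => hWt hx⟩

theorem LinearIndepOn.id_union_of_span_inf_le {s t u : Set X}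
    (ht : LinearIndepOn K id t) (hu : LinearIndepOn K id u) (hst : s ⊆ t) (hsu : s ⊆ u)
    (hinf : span K t ⊓ span K u ≤ span K s) :
    LinearIndepOn K id (t ∪ u) := by
  have hu' : LinearIndepOn K id (s ∪ u \ s) := by rwa [Set.union_sdiff_cancel hsu]
  obtain ⟨-, hus, hdisj⟩ := (linearIndepOn_id_union_iff Set.disjoint_sdiff_right).1 hu'
  have hdisj' : Disjoint (span K t) (span K (u \ s)) := by
    refine disjoint_iff_inf_le.2 fun x ⟨hxt, hxu⟩ => ?_
    have hxs : x ∈ span K s := hinf ⟨hxt, span_mono Set.sdiff_subset hxu⟩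
    exact (disjoint_def.1 hdisj) x hxs hxu
  have htu : t ∪ u \ s = t ∪ u := by
    ext x; have := @hst x; simp only [Set.mem_union, Set.mem_sdiff]; tauto
  exact htu ▸ ht.id_union hus hdisj'

theorem LinearIndepOn.exists_extension_adapted {U B Z : Submodule K X} (hU : U ≤ Z) (hB : B ≤ Z)
    {s : Set X} (hs : LinearIndepOn K id s) (hspan : span K s = U ⊓ B) :
    ∃ sU sZ, s ⊆ sU ∧ sU ⊆ sZ ∧ LinearIndepOn K id sZ ∧
      span K sU = U ∧ span K sZ = Z ∧ span K (sZ ∩ B) = B := by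
  have hsUB : s ⊆ ↑(U ⊓ B) := hspan ▸ subset_span
  obtain ⟨sU, hssU, hsU, hsU_span⟩ := hs.exists_extension_span_eq fun x hx => (hsUB hx).1
  obtain ⟨sB, hssB, hsB, hsB_span⟩ := hs.exists_extension_span_eq fun x hx => (hsUB hx).2
  have hunion : LinearIndepOn K id (sU ∪ sB) :=
    hsU.id_union_of_span_inf_le hsB hssU hssB (by rw [hsU_span, hsB_span, hspan])
  have hsU_le : sU ⊆ U := hsU_span ▸ subset_span
  have hsB_le : sB ⊆ B := hsB_span ▸ subset_span
  obtain ⟨sZ, hsZ, hsZ_ind, hsZ_span⟩ := hunion.exists_extension_span_eq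
    (Set.union_subset (hsU_le.trans hU) (hsB_le.trans hB))
  refine ⟨sU, sZ, hssU, Set.subset_union_left.trans hsZ, hsZ_ind, hsU_span, hsZ_span,
    le_antisymm (span_le.2 Set.inter_subset_right) ?_⟩
  calc B = span K sB := hsB_span.symm
    _ ≤ span K (sZ ∩ B) :=
      span_mono (Set.subset_inter (Set.subset_union_right.trans hsZ) hsB_le)

end LinearAlgebra

-- In characteristic two the terms for `(a, b)` and `(b, a)` cancel.
theorem Finset.sum_sum_erase_eq_zero_of_symm {ι M : Type*} [DecidableEq ι] [AddCommGroup M]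
    [Module (ZMod 2) M] (s : Finset ι) (f : ι → ι → M) (hf : ∀ a b, f a b = f b a) :
    ∑ a ∈ s, ∑ b ∈ s.erase a, f a b = 0 := by
  rw [← Finset.sum_finset_product' s.offDiag s (fun a => s.erase a)
    (fun p => by rw [Finset.mem_offDiag, Finset.mem_erase]; tauto)]
  refine Finset.sum_involution (fun p _ => p.swap) (fun p _ => ?_) (fun p hp _ => ?_)
    (fun p hp => Finset.mem_offDiag.2 ?_) (fun p _ => p.swap_swap)
  · rw [Prod.fst_swap, Prod.snd_swap, hf p.2, ← two_smul (ZMod 2), show (2 : ZMod 2) = 0 from rfl,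
      zero_smul]
  · exact fun h => (Finset.mem_offDiag.1 hp).2.2 (congrArg Prod.snd h)
  · obtain ⟨h1, h2, h12⟩ := Finset.mem_offDiag.1 hp
    exact ⟨h2, h1, h12.symm⟩

namespace SimpComplex

open Classical in
/-- `t` as a `q`-chain of `K`, or `0` when `t` is not a `q`-simplex of `K`. -/
noncomputable def simplexChain (K : SimpComplex V) (q : ℕ) (t : Finset V) : K.Chain q :=
  if h : t ∈ K.faces ∧ t.card = q + 1 then Finsupp.single ⟨t, h⟩ 1 else 0

variable (K : SimpComplex V) {q : ℕ}

theorem simplexChain_val (σ : K.simplices q) : K.simplexChain q σ.1 = Finsupp.single σ 1 :=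
  dif_pos σ.2

theorem facetSum_eq_sum_simplexChain (σ : K.simplices (q + 1)) :
    K.facetSum q σ = ∑ v ∈ σ.1, K.simplexChain q (σ.1.erase v) := by
  rw [facetSum, ← Finset.sum_attach σ.1]
  exact Finset.sum_congr rfl fun v _ => (K.simplexChain_val ⟨σ.1.erase v, _⟩).symm

theorem boundary_single (σ : K.simplices (q + 1)) (a : ZMod 2) :
    K.boundary (q + 1) (Finsupp.single σ a) = a • K.facetSum q σ :=
  Finsupp.linearCombination_single _ _ _

theorem boundary_simplexChain (σ : K.simplices (q + 1)) :
    K.boundary (q + 1) (K.simplexChain (q + 1) σ.1) =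
      ∑ v ∈ σ.1, K.simplexChain q (σ.1.erase v) := by
  rw [simplexChain_val, boundary_single, one_smul, facetSum_eq_sum_simplexChain]

theorem boundary_facetSum_s18 (σ : K.simplices (q + 2)) :
    K.boundary (q + 1) (K.facetSum (q + 1) σ) = 0 := by
  rw [facetSum_eq_sum_simplexChain, map_sum]
  have hfacet : ∀ v ∈ σ.1, K.boundary (q + 1) (K.simplexChain (q + 1) (σ.1.erase v)) =
      ∑ w ∈ σ.1.erase v, K.simplexChain q ((σ.1.erase v).erase w) := fun v hv =>
    K.boundary_simplexChain ⟨σ.1.erase v, K.down_closed _ σ.2.1 _ (σ.1.erase_subset v),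
      by rw [Finset.card_erase_of_mem hv, σ.2.2]; rfl⟩
  rw [Finset.sum_congr rfl hfacet]
  exact Finset.sum_sum_erase_eq_zero_of_symm _ _ fun a b => by rw [Finset.erase_right_comm]

theorem boundary_comp_boundary :
    (K.boundary (q + 1)).comp (K.boundary (q + 2)) = 0 :=
  Finsupp.lhom_ext fun σ a =>
    show K.boundary (q + 1) (K.boundary (q + 2) (Finsupp.single σ a)) = 0 by
      rw [boundary_single, map_smul, boundary_facetSum_s18, smul_zero]

theorem boundaries_le_cycles (p : ℕ) : K.boundaries p ≤ K.cycles p := by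
  rintro _ ⟨c, rfl⟩
  cases p with
  | zero => rfl
  | succ q => exact LinearMap.congr_fun K.boundary_comp_boundary c

end SimpComplex

/-- (1) In a finite-dimensional vector space `V`, for nested subspaces
`W_1 ⊆ W_2 ⊆ V`, any basis of `W_1` can be extended first to a basis of `W_2`
and then to a basis of `V`.  (2) Consequently, for a subcomplex `L ⊆ K` with
`ℤ/2` coefficients, any basis of `Z_p(L) ∩ B_p(K)` starting with a basis of
`B_p(L)` can be extended to a consistent basis `A_L` of `Z_p(L)` and further
to a consistent basis `A_K` of `Z_p(K)` with `A_L ⊆ A_K`, so that the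
homology map `i_* : H_p(L) → H_p(K)` is diagonal in these bases: each basis
element of `A_L` is sent either into `B_p(K)` (i.e. its class maps to zero) or
to a basis element of `A_K` not in `B_p(K)` (a basis class of `H_p(K)`). -/
theorem basis_extension_and_diagonal_homology_map :
    (∀ (𝕜 : Type) [Field 𝕜] (X : Type) [AddCommGroup X] [Module 𝕜 X]
      [FiniteDimensional 𝕜 X] (W1 W2 : Submodule 𝕜 X), W1 ≤ W2 →
      ∀ s : Set X, LinearIndependent 𝕜 ((↑) : s → X) →
        Submodule.span 𝕜 s = W1 →
        ∃ t u : Set X, s ⊆ t ∧ t ⊆ u ∧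
          LinearIndependent 𝕜 ((↑) : u → X) ∧
          Submodule.span 𝕜 t = W2 ∧ Submodule.span 𝕜 u = ⊤) ∧
    (∀ (Vt : Type) [DecidableEq Vt] (L K : SimpComplex Vt),
      L.faces ⊆ K.faces → ∀ p : ℕ,
      ∀ s1 s2 : Set (K.Chain p), s1 ⊆ s2 →
        LinearIndependent (ZMod 2) ((↑) : s2 → K.Chain p) →
        Submodule.span (ZMod 2) s1 = K.boundariesOf L.faces p →
        Submodule.span (ZMod 2) s2 = K.cyclesOf L.faces p ⊓ K.boundaries p →
        ∃ sL sK : Set (K.Chain p), s2 ⊆ sL ∧ sL ⊆ sK ∧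
          LinearIndependent (ZMod 2) ((↑) : sK → K.Chain p) ∧
          Submodule.span (ZMod 2) sL = K.cyclesOf L.faces p ∧
          Submodule.span (ZMod 2) sK = K.cycles p ∧
          Submodule.span (ZMod 2) (sK ∩ ↑(K.boundaries p)) = K.boundaries p ∧
          ∀ x ∈ sL, x ∈ K.boundaries p ∨ (x ∈ sK ∧ x ∉ K.boundaries p)) := by
  refine ⟨fun 𝕜 _ X _ _ _ W1 W2 hW s hs hspan => ?_, fun Vt _ L K _ p s1 s2 _ hs2 _ hspan => ?_⟩
  · obtain ⟨t, hst, ht, ht_span⟩ := LinearIndepOn.exists_extension_span_eq (W := W2) hs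
      ((hspan ▸ Submodule.subset_span : s ⊆ W1).trans hW)
    obtain ⟨u, htu, hu, hu_span⟩ := ht.exists_extension_span_eq (W := ⊤) (Set.subset_univ _)
    exact ⟨t, u, hst, htu, hu, ht_span, hu_span⟩
  · obtain ⟨sL, sK, hs2L, hLK, hsK, hsL_span, hsK_span, hsKB_span⟩ :=
      LinearIndepOn.exists_extension_adapted inf_le_right (K.boundaries_le_cycles p) hs2 hspan
    exact ⟨sL, sK, hs2L, hLK, hsK, hsL_span, hsK_span, hsKB_span,
      fun x hx => or_iff_not_imp_left.2 fun hxB => ⟨hLK hx, hxB⟩⟩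
end
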